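/- arXiv:2212.04752 — 11 statements merged into one kernel-verified Lean document; each statement's English description precedes it below -/
import Mathlib

section
/- Let (Ω, μ) be a measure space and f : Ω → [0,∞) a μ-integrable function. Then there exists a function h : [0,∞) → [0,∞) which is continuous, strictly increasing, concave, satisfies h(0) = 0 and lim_{s→0⁺} h(s)/s = ∞, and such that ∫ h(f) dμ < ∞. -/
open Filter Topology MeasureTheory
open scoped ENNReal

noncomputable def hfun (b : ℕ → ℝ) (s : ℝ) : ℝ := ⨅ k : ℕ, (((k : ℝ) + 1) * max s 0 + b k)

lemma hfun_bdd {b : ℕ → ℝ} (hb : ∀ k, 0 < b k) (s : ℝ) :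
    BddBelow (Set.range fun k : ℕ => ((k : ℝ) + 1) * max s 0 + b k) := by
  refine ⟨0, ?_⟩
  rintro x ⟨k, rfl⟩
  have h1 : (0:ℝ) ≤ ((k : ℝ) + 1) * max s 0 := by positivity
  have := (hb k).le
  simp only []
  linarith

lemma hfun_le {b : ℕ → ℝ} (hb : ∀ k, 0 < b k) (s : ℝ) (k : ℕ) :
    hfun b s ≤ ((k : ℝ) + 1) * max s 0 + b k :=
  ciInf_le (hfun_bdd hb s) k

lemma le_hfun {b : ℕ → ℝ} {s a : ℝ} (h : ∀ k : ℕ, a ≤ ((k : ℝ) + 1) * max s 0 + b k) :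
    a ≤ hfun b s := le_ciInf h

lemma hfun_nonneg {b : ℕ → ℝ} (hb : ∀ k, 0 < b k) (s : ℝ) : 0 ≤ hfun b s := by
  refine le_hfun fun k => ?_
  have h1 : (0:ℝ) ≤ ((k : ℝ) + 1) * max s 0 := by positivity
  have := (hb k).le
  linarith

lemma hfun_add_le {b : ℕ → ℝ} (hb : ∀ k, 0 < b k) {s t : ℝ} (hs : 0 ≤ s) (hst : s ≤ t) :
    hfun b s + (t - s) ≤ hfun b t := by
  have ht : 0 ≤ t := hs.trans hst
  refine le_hfun fun k => ?_
  have h1 : hfun b s ≤ ((k : ℝ) + 1) * s + b k := by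
    have := hfun_le hb s k; rwa [max_eq_left hs] at this
  have h2 : (1:ℝ) ≤ (k:ℝ) + 1 := by have := Nat.cast_nonneg (α := ℝ) k; linarith
  rw [max_eq_left ht]
  nlinarith [sub_nonneg.2 hst]

lemma hfun_mono {b : ℕ → ℝ} (hb : ∀ k, 0 < b k) {s t : ℝ} (hs : 0 ≤ s) (hst : s ≤ t) :
    hfun b s ≤ hfun b t := by
  have := hfun_add_le hb hs hst; linarith

lemma hfun_scale {b : ℕ → ℝ} (hb : ∀ k, 0 < b k) {s t : ℝ} (hs : 0 ≤ s) (hst : s ≤ t)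
    (ht : 0 < t) : s / t * hfun b t ≤ hfun b s := by
  refine le_hfun fun k => ?_
  have h1 : hfun b t ≤ ((k : ℝ) + 1) * t + b k := by
    have := hfun_le hb t k; rwa [max_eq_left (hs.trans hst)] at this
  have hd0 : 0 ≤ s / t := by positivity
  have hd1 : s / t ≤ 1 := by rw [div_le_one ht]; exact hst
  rw [max_eq_left hs]
  have h3 : s / t * hfun b t ≤ s / t * (((k : ℝ) + 1) * t + b k) :=
    mul_le_mul_of_nonneg_left h1 hd0
  have h4 : s / t * (((k : ℝ) + 1) * t + b k) = ((k:ℝ)+1) * s + s / t * b k := by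
    field_simp
  have h5 : s / t * b k ≤ b k := by nlinarith [(hb k).le]
  linarith

lemma hfun_subadd {b : ℕ → ℝ} (hb : ∀ k, 0 < b k) {s u : ℝ} (hs : 0 ≤ s) (hu : 0 ≤ u) :
    hfun b (s + u) ≤ hfun b s + hfun b u := by
  rcases eq_or_lt_of_le (by linarith : (0:ℝ) ≤ s + u) with h | h
  · have h1 := hfun_nonneg hb s
    have h2 := hfun_nonneg hb u
    rw [← h]
    have hs0 : s = 0 := by linarith
    have hu0 : u = 0 := by linarith
    subst hs0; simp at hu0 ⊢; subst hu0
    have := hfun_nonneg hb 0; linarith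
  · have h1 := hfun_scale hb hs (by linarith : s ≤ s + u) h
    have h2 := hfun_scale hb hu (by linarith : u ≤ s + u) h
    have : s / (s+u) + u / (s+u) = 1 := by field_simp
    nlinarith [hfun_nonneg hb (s+u)]

lemma hfun_zero {b : ℕ → ℝ} (hb : ∀ k, 0 < b k) (hb1 : ∀ k, b k ≤ (1/2 : ℝ)^k) :
    hfun b 0 = 0 := by
  refine le_antisymm ?_ (hfun_nonneg hb 0)
  by_contra hc
  push_neg at hc
  obtain ⟨k, hk⟩ := exists_pow_lt_of_lt_one hc (by norm_num : (1/2:ℝ) < 1)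
  have h1 := hfun_le hb 0 k
  rw [max_self, mul_zero, zero_add] at h1
  have := hb1 k
  linarith

lemma hfun_concave {b : ℕ → ℝ} (hb : ∀ k, 0 < b k) :
    ConcaveOn ℝ (Set.Ici 0) (hfun b) := by
  refine ⟨convex_Ici 0, fun x hx y hy a c ha hc hac => ?_⟩
  simp only [Set.mem_Ici] at hx hy
  have hxy : 0 ≤ a • x + c • y := by
    simp only [smul_eq_mul]; nlinarith
  refine le_hfun fun k => ?_
  have h1 : hfun b x ≤ ((k : ℝ) + 1) * x + b k := by
    have := hfun_le hb x k; rwa [max_eq_left hx] at this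
  have h2 : hfun b y ≤ ((k : ℝ) + 1) * y + b k := by
    have := hfun_le hb y k; rwa [max_eq_left hy] at this
  rw [max_eq_left hxy]
  simp only [smul_eq_mul]
  have h3 : a * b k + c * b k = b k := by rw [← add_mul, hac, one_mul]
  nlinarith [mul_le_mul_of_nonneg_left h1 ha, mul_le_mul_of_nonneg_left h2 hc, h3]

lemma hfun_abs_sub {b : ℕ → ℝ} (hb : ∀ k, 0 < b k) {s t : ℝ} (hs : 0 ≤ s) (ht : 0 ≤ t) :
    |hfun b t - hfun b s| ≤ hfun b |t - s| := by
  rcases le_total s t with h | h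
  · have h1 := hfun_subadd hb hs (by linarith : (0:ℝ) ≤ t - s)
    rw [add_sub_cancel] at h1
    have h2 := hfun_mono hb hs h
    rw [abs_of_nonneg (by linarith : (0:ℝ) ≤ t - s), abs_of_nonneg (by linarith)]
    linarith
  · have h1 := hfun_subadd hb ht (by linarith : (0:ℝ) ≤ s - t)
    rw [add_sub_cancel] at h1
    have h2 := hfun_mono hb ht h
    rw [abs_of_nonpos (by linarith : t - s ≤ 0), abs_of_nonpos (by linarith), neg_sub, neg_sub]
    linarith

lemma hfun_continuousOn {b : ℕ → ℝ} (hb : ∀ k, 0 < b k) (hb1 : ∀ k, b k ≤ (1/2 : ℝ)^k) :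
    ContinuousOn (hfun b) (Set.Ici 0) := by
  intro x hx
  simp only [Set.mem_Ici] at hx
  rw [Metric.continuousWithinAt_iff]
  intro ε hε
  obtain ⟨k, hk⟩ := exists_pow_lt_of_lt_one (by linarith : (0:ℝ) < ε/2) (by norm_num : (1/2:ℝ) < 1)
  have hck : (0:ℝ) < (k:ℝ) + 1 := by positivity
  refine ⟨ε / (2 * ((k:ℝ)+1)), by positivity, fun y hy hdy => ?_⟩
  simp only [Set.mem_Ici] at hy
  rw [Real.dist_eq] at hdy ⊢
  have h1 := hfun_abs_sub hb hx hy
  have h2 : hfun b |y - x| ≤ ((k:ℝ)+1) * |y - x| + b k := by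
    have := hfun_le hb |y - x| k
    rwa [max_eq_left (abs_nonneg _)] at this
  have h3 : ((k:ℝ)+1) * |y - x| < ((k:ℝ)+1) * (ε / (2 * ((k:ℝ)+1))) :=
    mul_lt_mul_of_pos_left hdy hck
  have h4 : ((k:ℝ)+1) * (ε / (2 * ((k:ℝ)+1))) = ε/2 := by field_simp
  have h5 := hb1 k
  calc |hfun b y - hfun b x| ≤ hfun b |y - x| := h1
    _ < ε := by linarith

lemma hfun_strictMono {b : ℕ → ℝ} (hb : ∀ k, 0 < b k) :
    StrictMonoOn (hfun b) (Set.Ici 0) := by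
  intro s hs t ht hst
  have := hfun_add_le hb (Set.mem_Ici.1 hs) hst.le
  linarith

lemma hfun_eq_max (b : ℕ → ℝ) (s : ℝ) : hfun b s = hfun b (max s 0) := by
  unfold hfun
  rw [max_eq_left (le_max_right s 0)]

lemma hfun_continuous {b : ℕ → ℝ} (hb : ∀ k, 0 < b k) (hb1 : ∀ k, b k ≤ (1/2 : ℝ)^k) :
    Continuous (hfun b) := by
  have h1 : Continuous (fun s : ℝ => hfun b (max s 0)) :=
    (hfun_continuousOn hb hb1).comp_continuous (continuous_id.max continuous_const)
      (fun x => Set.mem_Ici.2 (le_max_right x 0))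
  convert h1 using 1
  funext s
  exact hfun_eq_max b s

lemma hfun_tendsto {b : ℕ → ℝ} (hb : ∀ k, 0 < b k) :
    Tendsto (fun s => hfun b s / s) (𝓝[>] 0) atTop := by
  rw [tendsto_atTop]
  intro M
  set N : ℕ := max ⌈M⌉₊ 1 with hN
  have hN1 : 1 ≤ N := le_max_right _ _
  have hNpos : (0:ℝ) < N := by positivity
  have hMN : M ≤ (N:ℝ) := le_trans (Nat.le_ceil M) (Nat.cast_le.2 (le_max_left _ _))
  have hne : (Finset.range N).Nonempty := ⟨0, Finset.mem_range.2 hN1⟩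
  set m : ℝ := (Finset.range N).inf' hne b with hm
  have hmpos : 0 < m := by
    rw [hm, Finset.lt_inf'_iff]
    intro i _
    exact hb i
  set δ : ℝ := m / N with hδ
  have hδpos : 0 < δ := by positivity
  filter_upwards [Ioo_mem_nhdsGT_of_mem (Set.mem_Ico.2 ⟨le_refl (0:ℝ), hδpos⟩)] with s hs
  obtain ⟨hs0, hsδ⟩ := hs
  have key : (N:ℝ) * s ≤ hfun b s := by
    refine le_hfun fun k => ?_
    rw [max_eq_left hs0.le]
    rcases le_or_gt (N:ℝ) ((k:ℝ)+1) with h | h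
    · nlinarith [(hb k).le]
    · have hkN : k ∈ Finset.range N := by
        rw [Finset.mem_range]
        exact_mod_cast (by push_cast; linarith : ((k:ℝ)) < (N:ℝ))
      have h1 : m ≤ b k := Finset.inf'_le b hkN
      have h2 : (N:ℝ) * s < N * δ := by nlinarith
      have h3 : (N:ℝ) * δ = m := by rw [hδ]; field_simp
      nlinarith [Nat.cast_nonneg (α := ℝ) k]
  rw [le_div_iff₀ hs0]
  nlinarith

theorem aux {Ω : Type*} [MeasurableSpace Ω] (μ : Measure Ω) (f : Ω → ℝ)
    (hm : Measurable f) (hf0 : ∀ x, 0 ≤ f x) (hf : Integrable f μ) :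
    ∃ b : ℕ → ℝ, (∀ k, 0 < b k) ∧ (∀ k, b k ≤ (1/2 : ℝ)^k) ∧
      Integrable (fun x => hfun b (f x)) μ := by
  classical
  set g : Ω → ℝ≥0∞ := fun x => ENNReal.ofReal (f x) with hg
  have hgm : Measurable g := ENNReal.measurable_ofReal.comp hm
  set R : ℝ≥0∞ := ∫⁻ x, g x ∂μ with hRdef
  have hgnorm : ∀ x, g x = (‖f x‖₊ : ℝ≥0∞) := by
    intro x
    rw [hg]
    simp only []
    rw [← enorm_eq_nnnorm, ← ofReal_norm, Real.norm_of_nonneg (hf0 x)]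
  have hR : R ≠ ⊤ := by
    have h2 := (hasFiniteIntegral_iff_ofReal (Eventually.of_forall hf0)).1 hf.hasFiniteIntegral
    simp only [hRdef, hg]
    exact h2.ne
  set ρ : Measure Ω := μ.withDensity g with hρdef
  have hρs : ∀ s : Set Ω, MeasurableSet s → ρ s = ∫⁻ x in s, g x ∂μ := fun s hs =>
    withDensity_apply g hs
  have hρuniv : ρ Set.univ = R := by
    rw [hρs Set.univ MeasurableSet.univ, Measure.restrict_univ]
  -- Markov
  have hmark : ∀ t : ℝ, 0 < t → ENNReal.ofReal t * μ {x | t < f x} ≤ R := by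
    intro t ht
    have h1 : {x | t < f x} ⊆ {x | ENNReal.ofReal t ≤ g x} := by
      intro x hx
      exact (ENNReal.ofReal_le_ofReal (le_of_lt hx))
    calc ENNReal.ofReal t * μ {x | t < f x}
        ≤ ENNReal.ofReal t * μ {x | ENNReal.ofReal t ≤ g x} :=
          mul_le_mul_right (measure_mono h1) _
      _ ≤ ∫⁻ x, g x ∂μ := mul_meas_ge_le_lintegral₀ hgm.aemeasurable _
  -- small sets have small weighted measure
  have step : ∀ (j : ℕ) (e : ℝ), 0 < e → ∃ t : ℝ, 0 < t ∧ t < e / 2 ∧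
      ρ {x | 0 < f x ∧ f x ≤ t} ≤ ENNReal.ofReal ((1/2 : ℝ)^j / ((j : ℝ)+1)) := by
    intro j e he
    set s : ℕ → Set Ω := fun n => {x | 0 < f x ∧ f x ≤ 1/((n:ℝ)+1)} with hs
    have hsm : ∀ n, MeasurableSet (s n) := by
      intro n
      exact (hm measurableSet_Ioi).inter (hm measurableSet_Iic)
    have hanti : Antitone s := by
      intro n m hnm x hx
      refine ⟨hx.1, hx.2.trans ?_⟩
      apply one_div_le_one_div_of_le (by positivity)
      have : (n:ℝ) ≤ (m:ℝ) := Nat.cast_le.2 hnm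
      linarith
    have hiInter : (⋂ n, s n) = ∅ := by
      ext x
      simp only [Set.mem_iInter, Set.mem_empty_iff_false, iff_false, not_forall]
      by_contra hc
      push_neg at hc
      have h1 : 0 < f x := (hc 0).1
      obtain ⟨n, hn⟩ := exists_nat_one_div_lt h1
      exact absurd ((hc n).2) (not_le.2 hn)
    have htend : Tendsto (fun n => ρ (s n)) atTop (𝓝 0) := by
      have h1 := tendsto_measure_iInter_atTop (μ := ρ) (fun n => (hsm n).nullMeasurableSet) hanti
        ⟨0, by
          refine ne_top_of_le_ne_top hR ?_
          rw [← hρuniv]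
          exact measure_mono (Set.subset_univ _)⟩
      rw [hiInter, measure_empty] at h1
      exact h1
    have hpos : (0:ℝ≥0∞) < ENNReal.ofReal ((1/2 : ℝ)^j / ((j : ℝ)+1)) := by
      rw [ENNReal.ofReal_pos]
      positivity
    have hev1 : ∀ᶠ n in atTop, ρ (s n) < ENNReal.ofReal ((1/2 : ℝ)^j / ((j : ℝ)+1)) :=
      htend.eventually_lt_const hpos
    have hev2 : ∀ᶠ n : ℕ in atTop, 1/((n:ℝ)+1) < e / 2 :=
      tendsto_one_div_add_atTop_nhds_zero_nat.eventually_lt_const (by positivity)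
    obtain ⟨n, hn1, hn2⟩ := (hev1.and hev2).exists
    exact ⟨1/((n:ℝ)+1), by positivity, hn2, hn1.le⟩
  choose T hT1 hT2 hT3 using step
  -- recursive sequence
  set E : ℕ → {t : ℝ // 0 < t} := fun n =>
    Nat.rec ⟨1, one_pos⟩ (fun k p => ⟨T (k+1) p.1 p.2, hT1 (k+1) p.1 p.2⟩) n with hE
  set ε : ℕ → ℝ := fun n => (E n).1 with hεdef
  have hεpos : ∀ n, 0 < ε n := fun n => (E n).2
  have hεhalf : ∀ k, ε (k+1) < ε k / 2 := fun k => hT2 (k+1) (ε k) (hεpos k)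
  have hερ : ∀ k, ρ {x | 0 < f x ∧ f x ≤ ε (k+1)} ≤
      ENNReal.ofReal ((1/2 : ℝ)^(k+1) / ((k : ℝ)+2)) := by
    intro k
    have h1 := hT3 (k+1) (ε k) (hεpos k)
    have h2 : ((k+1 : ℕ) : ℝ) + 1 = (k:ℝ) + 2 := by push_cast; ring
    rw [h2] at h1
    exact h1
  have hεle : ∀ k, ε k ≤ (1/2 : ℝ)^k := by
    intro k
    induction k with
    | zero => simp [hεdef, hE]
    | succ n ih =>
      have := hεhalf n
      have h2 : ((1:ℝ)/2)^(n+1) = (1/2)^n / 2 := by ring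
      rw [h2]
      linarith
  set b : ℕ → ℝ := fun k => (1/2 : ℝ)^k * ε (k+1) with hbdef
  have hbpos : ∀ k, 0 < b k := fun k => mul_pos (pow_pos (by norm_num) k) (hεpos (k+1))
  have hble : ∀ k, b k ≤ (1/2:ℝ)^k := by
    intro k
    have h1 := hεle (k+1)
    have h2 : ε (k+1) ≤ 1 := h1.trans (pow_le_one₀ (by norm_num) (by norm_num))
    have h3 : (0:ℝ) < (1/2:ℝ)^k := pow_pos (by norm_num) k
    calc b k = (1/2:ℝ)^k * ε (k+1) := rfl
      _ ≤ (1/2:ℝ)^k * 1 := by nlinarith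
      _ = (1/2:ℝ)^k := mul_one _
  refine ⟨b, hbpos, hble, ?_⟩
  -- the layer sets
  set S : ℕ → Set Ω := fun k => Nat.casesOn k {x | ε 1 < f x}
    (fun m => {x | ε (m+2) < f x ∧ f x ≤ ε (m+1)}) with hS
  have hSm : ∀ k, MeasurableSet (S k) := by
    intro k
    cases k with
    | zero => exact measurableSet_lt measurable_const hm
    | succ m =>
      have : S (m+1) = {x | ε (m+2) < f x} ∩ {x | f x ≤ ε (m+1)} := rfl
      rw [this]
      exact (measurableSet_lt measurable_const hm).inter (measurableSet_le hm measurable_const)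
  set ψ : ℕ → Ω → ℝ≥0∞ := fun k => (S k).indicator
    (fun x => ENNReal.ofReal ((k:ℝ)+1) * g x + ENNReal.ofReal (b k)) with hψ
  have hψm : ∀ k, Measurable (ψ k) :=
    fun k => ((measurable_const.mul hgm).add measurable_const).indicator (hSm k)
  -- every point with f x > 0 is in some layer
  have hcover : ∀ x, 0 < f x → ∃ k, x ∈ S k := by
    intro x hx
    rcases lt_or_ge (ε 1) (f x) with h | h
    · exact ⟨0, h⟩
    · have hex : ∃ n, ε n < f x := by
        obtain ⟨n, hn⟩ := exists_pow_lt_of_lt_one hx (by norm_num : (1/2:ℝ) < 1)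
        exact ⟨n, lt_of_le_of_lt (hεle n) hn⟩
      have hN := Nat.find_spec hex
      have hmin : ∀ m, m < Nat.find hex → f x ≤ ε m := fun m hm' =>
        not_lt.1 (Nat.find_min hex hm')
      have hN0 : Nat.find hex ≠ 0 := by
        intro h0
        rw [h0] at hN
        have he0 : ε 0 = 1 := rfl
        have h2 : ε 1 ≤ (1/2:ℝ)^1 := hεle 1
        rw [he0] at hN
        norm_num at h2
        linarith
      have hN1 : Nat.find hex ≠ 1 := by
        intro h0
        rw [h0] at hN
        linarith
      obtain ⟨m, hNm⟩ : ∃ m, Nat.find hex = m + 2 := ⟨Nat.find hex - 2, by omega⟩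
      rw [hNm] at hN
      refine ⟨m+1, hN, hmin (m+1) (by omega)⟩
  -- pointwise bound
  have hpoint : ∀ x, ENNReal.ofReal (hfun b (f x)) ≤ ∑' k, ψ k x := by
    intro x
    rcases eq_or_lt_of_le (hf0 x) with h | h
    · rw [← h, hfun_zero hbpos hble]
      simp
    · obtain ⟨k, hk⟩ := hcover x h
      have h1 : ENNReal.ofReal (hfun b (f x)) ≤ ψ k x := by
        rw [hψ]
        simp only []
        rw [Set.indicator_of_mem hk]
        have h2 : hfun b (f x) ≤ ((k:ℝ)+1) * f x + b k := by
          have := hfun_le hbpos (f x) k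
          rwa [max_eq_left (hf0 x)] at this
        calc ENNReal.ofReal (hfun b (f x)) ≤ ENNReal.ofReal (((k:ℝ)+1) * f x + b k) :=
            ENNReal.ofReal_le_ofReal h2
          _ = ENNReal.ofReal (((k:ℝ)+1) * f x) + ENNReal.ofReal (b k) :=
            ENNReal.ofReal_add (mul_nonneg (by positivity) (hf0 x)) (hbpos k).le
          _ = ENNReal.ofReal ((k:ℝ)+1) * ENNReal.ofReal (f x) + ENNReal.ofReal (b k) := by
            rw [ENNReal.ofReal_mul (by positivity)]
          _ = ENNReal.ofReal ((k:ℝ)+1) * g x + ENNReal.ofReal (b k) := rfl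
      exact h1.trans (ENNReal.le_tsum k)
  -- the integral of each layer function
  have hint : ∀ k, ∫⁻ x, ψ k x ∂μ =
      ENNReal.ofReal ((k:ℝ)+1) * ∫⁻ x in S k, g x ∂μ + ENNReal.ofReal (b k) * μ (S k) := by
    intro k
    rw [hψ]
    simp only []
    rw [lintegral_indicator (hSm k) _, lintegral_add_right _ measurable_const,
      lintegral_const, lintegral_const_mul _ hgm, Measure.restrict_apply_univ]
  have hSsub : ∀ k, S k ⊆ {x | ε (k+1) < f x} := by
    intro k x hx
    cases k with
    | zero => exact hx
    | succ m => exact hx.1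
  have hbound : ∀ k, ∫⁻ x, ψ k x ∂μ ≤ ENNReal.ofReal ((1/2:ℝ)^k) * (R + 1) +
      (if k = 0 then R else 0) := by
    intro k
    rw [hint k]
    have hb2 : ENNReal.ofReal (b k) * μ (S k) ≤ ENNReal.ofReal ((1/2:ℝ)^k) * R := by
      have h1 : ENNReal.ofReal (b k) =
          ENNReal.ofReal ((1/2:ℝ)^k) * ENNReal.ofReal (ε (k+1)) := by
        rw [← ENNReal.ofReal_mul (by positivity)]
      have h2 : μ (S k) ≤ μ {x | ε (k+1) < f x} := measure_mono (hSsub k)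
      calc ENNReal.ofReal (b k) * μ (S k)
          ≤ ENNReal.ofReal ((1/2:ℝ)^k) * ENNReal.ofReal (ε (k+1)) * μ {x | ε (k+1) < f x} := by
            rw [h1]; exact mul_le_mul_right h2 _
        _ = ENNReal.ofReal ((1/2:ℝ)^k) * (ENNReal.ofReal (ε (k+1)) * μ {x | ε (k+1) < f x}) := by
            rw [mul_assoc]
        _ ≤ ENNReal.ofReal ((1/2:ℝ)^k) * R := mul_le_mul_right (hmark _ (hεpos (k+1))) _
    cases k with
    | zero =>
      simp only [if_pos rfl]
      have h3 : ∫⁻ x in S 0, g x ∂μ ≤ R := setLIntegral_le_lintegral _ _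
      have h4 : ENNReal.ofReal ((0:ℕ):ℝ) + 1 = 1 := by norm_num
      have h5 : ENNReal.ofReal (((0:ℕ):ℝ)+1) = 1 := by norm_num
      rw [h5, one_mul]
      have h6 : ENNReal.ofReal ((1/2:ℝ)^(0:ℕ)) = 1 := by norm_num
      rw [h6, one_mul]
      calc (∫⁻ x in S 0, g x ∂μ) + ENNReal.ofReal (b 0) * μ (S 0)
          ≤ R + R := add_le_add h3 (by simpa [h6] using hb2)
        _ ≤ (R + 1) + R := add_le_add_left (le_add_right le_rfl) R
    | succ m =>
      simp only [if_neg (Nat.succ_ne_zero m)]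
      have h3 : ∫⁻ x in S (m+1), g x ∂μ ≤ ENNReal.ofReal ((1/2:ℝ)^(m+1) / ((m:ℝ)+2)) := by
        rw [← hρs _ (hSm (m+1))]
        refine le_trans (measure_mono ?_) (hερ m)
        intro x hx
        exact ⟨lt_trans (hεpos (m+2)) hx.1, hx.2⟩
      have h4 : ENNReal.ofReal (((m+1:ℕ):ℝ)+1) *
          ENNReal.ofReal ((1/2:ℝ)^(m+1) / ((m:ℝ)+2)) = ENNReal.ofReal ((1/2:ℝ)^(m+1)) := by
        rw [← ENNReal.ofReal_mul (by positivity)]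
        congr 1
        push_cast
        field_simp
        ring
      calc ENNReal.ofReal (((m+1:ℕ):ℝ)+1) * (∫⁻ x in S (m+1), g x ∂μ)
            + ENNReal.ofReal (b (m+1)) * μ (S (m+1))
          ≤ ENNReal.ofReal ((1/2:ℝ)^(m+1)) + ENNReal.ofReal ((1/2:ℝ)^(m+1)) * R := by
            refine add_le_add ?_ hb2
            rw [← h4]
            exact mul_le_mul_right h3 _
        _ ≤ ENNReal.ofReal ((1/2:ℝ)^(m+1)) * (R + 1) + 0 := by
            rw [mul_add, mul_one, add_zero, add_comm]
        _ = ENNReal.ofReal ((1/2:ℝ)^((m+1:ℕ))) * (R + 1) + 0 := by norm_num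
  constructor
  · exact ((hfun_continuous hbpos hble).measurable.comp hm).aestronglyMeasurable
  · rw [hasFiniteIntegral_iff_ofReal (Eventually.of_forall (fun x => hfun_nonneg hbpos (f x)))]
    have hgeom : (∑' k : ℕ, ENNReal.ofReal ((1/2:ℝ)^k)) < ⊤ := by
      have h1 : ∀ k : ℕ, ENNReal.ofReal ((1/2:ℝ)^k) = (ENNReal.ofReal (1/2))^k :=
        fun k => ENNReal.ofReal_pow (by norm_num) k
      rw [tsum_congr h1, ENNReal.tsum_geometric]
      rw [ENNReal.inv_lt_top, tsub_pos_iff_lt]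
      exact ENNReal.ofReal_lt_one.2 (by norm_num)
    calc ∫⁻ x, ENNReal.ofReal (hfun b (f x)) ∂μ
        ≤ ∫⁻ x, ∑' k, ψ k x ∂μ := lintegral_mono hpoint
      _ = ∑' k, ∫⁻ x, ψ k x ∂μ := lintegral_tsum (fun k => (hψm k).aemeasurable)
      _ ≤ ∑' k : ℕ, (ENNReal.ofReal ((1/2:ℝ)^k) * (R + 1) + (if k = 0 then R else 0)) :=
          ENNReal.tsum_le_tsum hbound
      _ = (∑' k : ℕ, ENNReal.ofReal ((1/2:ℝ)^k) * (R + 1))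
            + ∑' k : ℕ, (if k = 0 then R else 0) := ENNReal.tsum_add
      _ = (∑' k : ℕ, ENNReal.ofReal ((1/2:ℝ)^k)) * (R + 1) + R := by
          rw [ENNReal.tsum_mul_right, tsum_ite_eq]
      _ < ⊤ := by
          refine ENNReal.add_lt_top.2 ⟨?_, hR.lt_top⟩
          exact ENNReal.mul_lt_top hgeom (ENNReal.add_lt_top.2 ⟨hR.lt_top, ENNReal.one_lt_top⟩)

theorem de_la_vallee_poussin {Ω : Type*} [MeasurableSpace Ω] (μ : Measure Ω)
    (f : Ω → ℝ) (hf0 : ∀ x, 0 ≤ f x) (hf : Integrable f μ) :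
    ∃ h : ℝ → ℝ, ContinuousOn h (Set.Ici 0) ∧ StrictMonoOn h (Set.Ici 0) ∧
      ConcaveOn ℝ (Set.Ici 0) h ∧ (∀ s ≥ (0:ℝ), 0 ≤ h s) ∧ h 0 = 0 ∧
      Tendsto (fun s => h s / s) (𝓝[>] 0) atTop ∧
      Integrable (fun x => h (f x)) μ := by
  have hsm := hf.aestronglyMeasurable
  set g0 : Ω → ℝ := hsm.mk f with hg0
  have hg0m : StronglyMeasurable g0 := hsm.stronglyMeasurable_mk
  have hfg : f =ᵐ[μ] g0 := hsm.ae_eq_mk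
  set g' : Ω → ℝ := fun x => max (g0 x) 0 with hg'
  have hg'm : Measurable g' := hg0m.measurable.max measurable_const
  have hfg' : f =ᵐ[μ] g' := by
    filter_upwards [hfg] with x hx
    rw [hg']
    simp only []
    rw [← hx, max_eq_left (hf0 x)]
  have hg'0 : ∀ x, 0 ≤ g' x := fun x => le_max_right _ _
  have hg'int : Integrable g' μ := hf.congr hfg'
  obtain ⟨b, hbpos, hble, hbint⟩ := aux μ g' hg'm hg'0 hg'int
  refine ⟨hfun b, hfun_continuousOn hbpos hble, hfun_strictMono hbpos,
    hfun_concave hbpos, fun s _ => hfun_nonneg hbpos s, hfun_zero hbpos hble,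
    hfun_tendsto hbpos, ?_⟩
  exact hbint.congr (by filter_upwards [hfg'] with x hx; rw [hx])
end

section
/- Let h : [0,∞) → [0,∞) be concave, increasing, with h(0) = 0 and lim_{s→0⁺} h(s)/s = ∞. Then h is strictly subadditive: for all s, t > 0, h(s + t) < h(s) + h(t). -/
open Filter Topology

theorem strict_subadditive_of_concave (h : ℝ → ℝ)
    (hconc : ConcaveOn ℝ (Set.Ici 0) h) (hmono : MonotoneOn h (Set.Ici 0))
    (h0 : h 0 = 0) (hinf : Tendsto (fun s => h s / s) (𝓝[>] 0) atTop) :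
    ∀ s > (0:ℝ), ∀ t > (0:ℝ), h (s + t) < h s + h t := by
  intro s hs t ht
  by_contra hle
  push_neg at hle
  have hst : (0:ℝ) < s + t := by linarith
  set c := h (s + t) / (s + t) with hc
  have hcv : h (s + t) = c * (s + t) := by
    rw [hc]; field_simp
  -- key chord inequality: for 0 ≤ u ≤ v (v > 0), (u/v) * h v ≤ h u
  have key : ∀ u : ℝ, 0 < u → u < s + t → (u / (s + t)) * h (s + t) ≤ h u := by
    intro u hu huv
    have := hconc.2 (Set.self_mem_Ici) (Set.mem_Ici.2 hst.le)
      (show (0:ℝ) ≤ 1 - u / (s + t) by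
        have : u / (s + t) ≤ 1 := by
          rw [div_le_one hst]; linarith
        linarith)
      (show (0:ℝ) ≤ u / (s + t) by positivity)
      (show (1 - u / (s + t)) + u / (s + t) = 1 by ring)
    simp only [smul_eq_mul, mul_zero, zero_add, h0, mul_zero, add_zero] at this
    calc (u / (s + t)) * h (s + t) ≤ h (u / (s + t) * (s + t)) := this
      _ = h u := by rw [div_mul_cancel₀ _ hst.ne']
  have keys : c * s ≤ h s := by
    have := key s hs (by linarith)
    rw [hcv] at this
    calc c * s = s / (s + t) * (c * (s + t)) := by field_simp
      _ ≤ h s := this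
  have keyt : c * t ≤ h t := by
    have := key t ht (by linarith)
    rw [hcv] at this
    calc c * t = t / (s + t) * (c * (s + t)) := by field_simp
      _ ≤ h t := this
  have heqs : h s = c * s := by
    rw [hcv] at hle; nlinarith
  -- now derive h ε ≤ c * ε for all small ε, contradicting hinf
  have h1 : ∀ᶠ ε in 𝓝[>] (0:ℝ), c < h ε / ε := hinf.eventually_gt_atTop c
  have h2 : Set.Ioo (0:ℝ) s ∈ 𝓝[>] (0:ℝ) := Ioo_mem_nhdsGT_of_mem ⟨le_refl 0, hs⟩
  obtain ⟨ε, hεc, hε0, hεs⟩ := (h1.and (eventually_of_mem h2 fun x hx => hx)).exists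
  -- concavity at point s between ε and s + t
  have hden : (0:ℝ) < s + t - ε := by linarith
  set a := t / (s + t - ε) with ha
  set b := (s - ε) / (s + t - ε) with hb
  have hab : a + b = 1 := by
    rw [ha, hb, ← add_div, div_eq_one_iff_eq hden.ne']
    ring
  have hcomb : a * ε + b * (s + t) = s := by
    rw [ha, hb]; field_simp
    ring
  have := hconc.2 (Set.mem_Ici.2 hε0.le) (Set.mem_Ici.2 hst.le)
    (show (0:ℝ) ≤ a by positivity) (show (0:ℝ) ≤ b from div_nonneg (by linarith) hden.le) hab
  simp only [smul_eq_mul, hcomb] at this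
  rw [heqs, hcv] at this
  -- this : a * h ε + b * (c * (s + t)) ≤ c * s
  have ha0 : 0 < a := by positivity
  have hεle : h ε ≤ c * ε := by
    have hkey : a * h ε ≤ c * (a * ε) := by
      have : c * s - b * (c * (s + t)) = c * (a * ε) := by
        rw [ha, hb]; field_simp; ring
      linarith
    have := (mul_le_mul_iff_right₀ ha0).mp (by linarith [hkey] : a * h ε ≤ a * (c * ε))
    linarith
  have : h ε / ε ≤ c := by
    rw [div_le_iff₀ hε0]
    linarith
  linarith
end

section
/- Let s ≥ 0 and (s_j)_{j≥1} nonnegative reals with s = ∑_j s_j, and let h : [0,∞) → [0,∞) be increasing, strictly subadditive (h(a+b) < h(a)+h(b) for a,b > 0) with h(0)=0. If h(s) = ∑_j h(s_j), then there is at most one index j₀ with s_{j₀} ≠ 0, and for that index s_{j₀} = s. -/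
/-!
Countable subadditivity `h (∑ gₖ) ≤ ∑ h (gₖ)` holds for every nonnegative summable family, even
though `h` need not be continuous at `0`: cutting the series after finitely many terms costs at most
`h` of a small positive number, and such values are arbitrarily small unless the family has finite
support, in which case finite subadditivity suffices. If two terms `f i`, `f j` were nonzero,
merging them into one term keeps `∑ f = s` but lowers `∑ h (f k)` strictly below `h s`, contradicting
countable subadditivity.
-/

open Filter Topology Function

section Merge

variable {β α : Type*} [DecidableEq β] [AddCommGroup α]

def mergeTerms (f : β → α) (i j : β) : β → α :=
  update (update f i (f i + f j)) j 0

theorem hasSum_mergeTerms [TopologicalSpace α] [IsTopologicalAddGroup α] {f : β → α} {a : α}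
    (hf : HasSum f a) {i j : β} (hij : i ≠ j) : HasSum (mergeTerms f i j) a := by
  rw [mergeTerms]
  convert (hf.update i (f i + f j)).update j 0 using 1
  rw [update_of_ne hij.symm]
  abel

theorem mergeTerms_nonneg [PartialOrder α] [IsOrderedAddMonoid α] {f : β → α} (hf : ∀ k, 0 ≤ f k)
    (i j k : β) : 0 ≤ mergeTerms f i j k := by
  simp only [mergeTerms, update_apply]
  split_ifs
  exacts [le_rfl, add_nonneg (hf i) (hf j), hf k]

theorem hasSum_comp_mergeTerms [TopologicalSpace α] [IsTopologicalAddGroup α] {γ : Type*}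
    [AddCommGroup γ] {φ : γ → α} (hφ : φ 0 = 0) {f : β → γ} {a : α} (hf : HasSum (φ ∘ f) a)
    {i j : β} (hij : i ≠ j) :
    HasSum (φ ∘ mergeTerms f i j) (a + (φ (f i + f j) - φ (f i) - φ (f j))) := by
  rw [mergeTerms, comp_update, comp_update, hφ]
  convert (hf.update i (φ (f i + f j))).update j 0 using 1
  simp only [update_of_ne hij.symm, comp_apply]
  abel

end Merge

section Subadditive

variable {h : ℝ → ℝ}

theorem subadditive_nonneg_of_strict (h0 : h 0 = 0)
    (hsub : ∀ a > (0:ℝ), ∀ b > (0:ℝ), h (a + b) < h a + h b) :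
    ∀ a ≥ (0:ℝ), ∀ b ≥ (0:ℝ), h (a + b) ≤ h a + h b := by
  intro a ha b hb
  rcases ha.eq_or_lt with rfl | ha
  · simp [h0]
  rcases hb.eq_or_lt with rfl | hb
  · simp [h0]
  exact (hsub a ha b hb).le

theorem nonneg_of_monotoneOn_Ici (hmono : MonotoneOn h (Set.Ici 0)) (h0 : h 0 = 0) {x : ℝ}
    (hx : 0 ≤ x) : 0 ≤ h x :=
  h0 ▸ hmono Set.self_mem_Ici hx hx

variable {β : Type*} {g : β → ℝ} {s t : ℝ}

theorem le_sum_of_subadditive_nonneg (h0 : h 0 = 0)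
    (hsub : ∀ a ≥ (0:ℝ), ∀ b ≥ (0:ℝ), h (a + b) ≤ h a + h b) (hg : ∀ k, 0 ≤ g k) (S : Finset β) :
    h (∑ k ∈ S, g k) ≤ ∑ k ∈ S, h (g k) :=
  Finset.le_sum_of_subadditive_on_pred h (0 ≤ ·) h0.le (fun a b ha hb => hsub a ha b hb)
    (fun _ _ => add_nonneg) g fun k _ => hg k

theorem le_hasSum_add_of_subadditive (hmono : MonotoneOn h (Set.Ici 0)) (h0 : h 0 = 0)
    (hsub : ∀ a ≥ (0:ℝ), ∀ b ≥ (0:ℝ), h (a + b) ≤ h a + h b) (hg : ∀ k, 0 ≤ g k)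
    (hgs : HasSum g s) (hht : HasSum (fun k => h (g k)) t) {x : ℝ} (hx : 0 < x) :
    h s ≤ t + h x := by
  obtain ⟨S, hS⟩ := (hgs.eventually (lt_mem_nhds (by linarith : s - x < s))).exists
  set σ := ∑ k ∈ S, g k
  have hσ : 0 ≤ σ := Finset.sum_nonneg fun k _ => hg k
  have hσs : σ ≤ s := sum_le_hasSum S (fun k _ => hg k) hgs
  calc h s = h (σ + (s - σ)) := by rw [add_sub_cancel]
    _ ≤ h σ + h (s - σ) := hsub σ hσ (s - σ) (sub_nonneg.2 hσs)
    _ ≤ ∑ k ∈ S, h (g k) + h x := by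
      gcongr
      · exact le_sum_of_subadditive_nonneg h0 hsub hg S
      · exact hmono (sub_nonneg.2 hσs) hx.le (by linarith)
    _ ≤ t + h x := by
      gcongr
      exact sum_le_hasSum S (fun k _ => nonneg_of_monotoneOn_Ici hmono h0 (hg k)) hht

theorem le_of_hasSum_of_subadditive (hmono : MonotoneOn h (Set.Ici 0)) (h0 : h 0 = 0)
    (hsub : ∀ a ≥ (0:ℝ), ∀ b ≥ (0:ℝ), h (a + b) ≤ h a + h b) (hg : ∀ k, 0 ≤ g k)
    (hgs : HasSum g s) (hht : HasSum (fun k => h (g k)) t) : h s ≤ t := by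
  by_cases hfin : (support g).Finite
  · have hzero : ∀ k ∉ hfin.toFinset, g k = 0 := fun k hk => by simpa using hk
    have hs : s = ∑ k ∈ hfin.toFinset, g k := hgs.unique (hasSum_sum_of_ne_finset_zero hzero)
    have ht : t = ∑ k ∈ hfin.toFinset, h (g k) :=
      hht.unique (hasSum_sum_of_ne_finset_zero fun k hk => by rw [hzero k hk, h0])
    rw [hs, ht]
    exact le_sum_of_subadditive_nonneg h0 hsub hg _
  · refine le_of_forall_pos_lt_add fun ε hε => ?_
    have hlarge : {k | ¬h (g k) < ε}.Finite :=
      eventually_cofinite.1 (hht.summable.tendsto_cofinite_zero.eventually (gt_mem_nhds hε))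
    obtain ⟨k, hk, hkε⟩ := (Set.Infinite.sdiff hfin hlarge).nonempty
    calc h s ≤ t + h (g k) :=
          le_hasSum_add_of_subadditive hmono h0 hsub hg hgs hht ((hg k).lt_of_ne' hk)
      _ < t + ε := by simpa using hkε

end Subadditive

theorem rigidity_strict_subadditive_general (s : ℝ)
    (f : ℕ → ℝ) (hf : ∀ j, 0 ≤ f j) (hsum : HasSum f s)
    (h : ℝ → ℝ) (hmono : MonotoneOn h (Set.Ici 0)) (h0 : h 0 = 0)
    (hsub : ∀ a > (0:ℝ), ∀ b > (0:ℝ), h (a + b) < h a + h b)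
    (heq : HasSum (fun j => h (f j)) (h s)) :
    (∀ i j, f i ≠ 0 → f j ≠ 0 → i = j) ∧ (∀ j, f j ≠ 0 → f j = s) := by
  have hunique : ∀ i j, f i ≠ 0 → f j ≠ 0 → i = j := by
    intro i j hi hj
    by_contra hij
    have hmerge := hsub (f i) ((hf i).lt_of_ne' hi) (f j) ((hf j).lt_of_ne' hj)
    have hcount := le_of_hasSum_of_subadditive hmono h0 (subadditive_nonneg_of_strict h0 hsub)
      (mergeTerms_nonneg hf i j) (hasSum_mergeTerms hsum hij)
      (hasSum_comp_mergeTerms h0 heq hij)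
    linarith
  refine ⟨hunique, fun j hj => ?_⟩
  exact (hasSum_single j fun k hk => not_not.1 fun hk0 => hk (hunique k j hk0 hj)).unique hsum

theorem rigidity_strict_subadditive (s : ℝ) (hs : 0 ≤ s)
    (f : ℕ → ℝ) (hf : ∀ j, 0 ≤ f j) (hsum : HasSum f s)
    (h : ℝ → ℝ) (hmono : MonotoneOn h (Set.Ici 0)) (h0 : h 0 = 0)
    (hsub : ∀ a > (0:ℝ), ∀ b > (0:ℝ), h (a + b) < h a + h b)
    (heq : HasSum (fun j => h (f j)) (h s)) :
    (∀ i j, f i ≠ 0 → f j ≠ 0 → i = j) ∧ (∀ j, f j ≠ 0 → f j = s) :=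
  rigidity_strict_subadditive_general s f hf hsum h hmono h0 hsub heq
end

section
/- Let (G, +, ν) be a complete abelian normed group (ν a norm: ν(a)=0 iff a=0, ν(-a)=ν(a), ν(a+b)≤ν(a)+ν(b)). Define a ⪯ b if there exists a sequence (a_j) in G with a_1 = a, b = ∑_j a_j (convergent in norm), and ν(b) = ∑_j ν(a_j). Then ⪯ is antisymmetric: if a ⪯ b and b ⪯ a then a = b. -/
open Filter Topology

/-- A sequence `a` is a pseudo-decomposition of `b`: `b = ∑ a j` with
`ν(b) = ∑ ν(a j)`. -/
def IsPseudoDecomp {G : Type*} [NormedAddCommGroup G] (a : ℕ → G) (b : G) : Prop :=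
  HasSum a b ∧ HasSum (fun j => ‖a j‖) ‖b‖

/-- `x ⪯ b`: `x` appears as a term of some pseudo-decomposition of `b`. -/
def PseudoLE {G : Type*} [NormedAddCommGroup G] (x b : G) : Prop :=
  ∃ a : ℕ → G, IsPseudoDecomp a b ∧ ∃ j, a j = x

lemma HasSum.norm_sub_le_sub_norm {ι G : Type*} [DecidableEq ι] [NormedAddCommGroup G]
    {f : ι → G} {b : G} {s : ℝ} (hf : HasSum f b) (hs : HasSum (fun i => ‖f i‖) s) (j : ι) :
    ‖b - f j‖ ≤ s - ‖f j‖ := by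
  have hrest : HasSum (Function.update f j 0) (b - f j) := by
    simpa [neg_add_eq_sub] using hf.update j 0
  have hrest_norm : HasSum (Function.update (fun i => ‖f i‖) j 0) (s - ‖f j‖) := by
    simpa [neg_add_eq_sub] using hs.update j 0
  refine hrest.norm_le_of_bounded hrest_norm fun i => ?_
  rcases eq_or_ne i j with rfl | hij
  · simp
  · simp [hij]

lemma PseudoLE.norm_add_norm_sub_le {G : Type*} [NormedAddCommGroup G] {x b : G}
    (h : PseudoLE x b) : ‖x‖ + ‖b - x‖ ≤ ‖b‖ := by
  obtain ⟨a, ⟨hsum, hnorm⟩, j, rfl⟩ := h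
  linarith [hsum.norm_sub_le_sub_norm hnorm j]

theorem pseudoLE_antisymm_general {G : Type*} [NormedAddCommGroup G]
    (a b : G) (hab : PseudoLE a b) (hba : PseudoLE b a) : a = b := by
  have h₁ := hab.norm_add_norm_sub_le
  have h₂ := hba.norm_add_norm_sub_le
  rw [norm_sub_rev] at h₁
  exact sub_eq_zero.mp (norm_le_zero_iff.mp (by linarith))

theorem pseudoLE_antisymm {G : Type*} [NormedAddCommGroup G] [CompleteSpace G]
    (a b : G) (hab : PseudoLE a b) (hba : PseudoLE b a) : a = b :=
  pseudoLE_antisymm_general a b hab hba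
end

section
/- Let (G, +, ν) be a complete abelian normed group and define a ⪯ b if there exists a sequence (a_j) in G with a_1 = a, b = ∑_j a_j, and ν(b) = ∑_j ν(a_j). Then ⪯ is transitive: if a ⪯ b and b ⪯ c then a ⪯ c. -/
/-!
Let `a = u j` for a pseudo-decomposition `u` of `b`, and let `b` be the `k`-th term of a
pseudo-decomposition `d` of `c`. Replace that term of `d` by the whole sequence `u`. Since `u`
sums to `b` and its norms sum to `‖b‖`, the new sequence still sums to `c` with norms summing to
`‖c‖`, and `a` is one of its terms.
-/

open Filter Topology

open Function

/-- The terms of `u` at the even indices, those of `v` at the odd ones. -/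
def interleave {α : Type*} (u v : ℕ → α) : ℕ → α :=
  Sum.elim u v ∘ Equiv.natSumNatEquivNat.symm

section interleave

variable {α β : Type*} (u v : ℕ → α)

theorem interleave_two_mul (n : ℕ) : interleave u v (2 * n) = u n := by
  have : Equiv.natSumNatEquivNat (Sum.inl n) = 2 * n := by
    simp only [Equiv.natSumNatEquivNat_apply, Sum.elim_inl]
  rw [interleave, comp_apply, ← this, Equiv.symm_apply_apply, Sum.elim_inl]

theorem comp_interleave (f : α → β) :
    (fun n => f (interleave u v n)) = interleave (fun n => f (u n)) (fun n => f (v n)) :=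
  funext fun _ => congrFun (Sum.comp_elim f u v) _

end interleave

theorem HasSum.interleave {M : Type*} [AddCommMonoid M] [TopologicalSpace M] [ContinuousAdd M]
    {u v : ℕ → M} {a b : M} (hu : HasSum u a) (hv : HasSum v b) :
    HasSum (interleave u v) (a + b) :=
  (Equiv.natSumNatEquivNat.symm.hasSum_iff).mpr (HasSum.sum (f := Sum.elim u v) hu hv)

theorem HasSum.update_zero {M β : Type*} [AddCommGroup M] [TopologicalSpace M]
    [IsTopologicalAddGroup M] [DecidableEq β] {f : β → M} {a : M} (hf : HasSum f a) (k : β) :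
    HasSum (Function.update f k 0) (a - f k) := by
  simpa only [zero_sub, neg_add_eq_sub] using hf.update k 0

theorem HasSum.norm_update_zero {E β : Type*} [SeminormedAddCommGroup E] [DecidableEq β]
    {f : β → E} {s : ℝ} (hf : HasSum (fun j => ‖f j‖) s) (k : β) :
    HasSum (fun j => ‖Function.update f k 0 j‖) (s - ‖f k‖) := by
  rw [funext (apply_update (fun _ => norm) f k 0), norm_zero]
  exact hf.update_zero k

theorem IsPseudoDecomp.interleave_update_zero {G : Type*} [NormedAddCommGroup G] {d u : ℕ → G}
    {c : G} (hd : IsPseudoDecomp d c) (k : ℕ) (hu : IsPseudoDecomp u (d k)) :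
    IsPseudoDecomp (interleave u (update d k 0)) c := by
  constructor
  · simpa only [add_sub_cancel] using hu.1.interleave (hd.1.update_zero k)
  · have h := hu.2.interleave (hd.2.norm_update_zero k)
    rw [add_sub_cancel] at h
    exact comp_interleave u _ norm ▸ h

theorem pseudoLE_trans_general {G : Type*} [NormedAddCommGroup G]
    (a b c : G) (hab : PseudoLE a b) (hbc : PseudoLE b c) : PseudoLE a c := by
  obtain ⟨u, hu, j, rfl⟩ := hab
  obtain ⟨d, hd, k, hdk⟩ := hbc
  rw [← hdk] at hu
  exact ⟨_, hd.interleave_update_zero k hu, 2 * j, interleave_two_mul _ _ j⟩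

theorem pseudoLE_trans {G : Type*} [NormedAddCommGroup G] [CompleteSpace G]
    (a b c : G) (hab : PseudoLE a b) (hbc : PseudoLE b c) : PseudoLE a c :=
  pseudoLE_trans_general a b c hab hbc
end

section
/- Let (G, +, ν) be a complete abelian normed group and a, b ∈ G with a ⪯ b (i.e., a is a term of a pseudo-decomposition of b). Then ν(b) = ν(a) + ν(b − a); in particular (a, b−a, 0, 0, …) is a pseudo-decomposition of b. -/
open Filter Topology

theorem pseudoLE_norm_add {G : Type*} [NormedAddCommGroup G] [CompleteSpace G]
    (a b : G) (hab : PseudoLE a b) :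
    ‖b‖ = ‖a‖ + ‖b - a‖ ∧
      IsPseudoDecomp (fun j => if j = 0 then a else if j = 1 then b - a else 0) b := by
  obtain ⟨c, ⟨hc, hcn⟩, j₀, hj⟩ := hab
  subst hj
  have h1 : HasSum (fun j => c j - (if j = j₀ then c j₀ else 0)) (b - c j₀) :=
    hc.sub (hasSum_ite_eq j₀ (c j₀))
  have h2 : HasSum (fun j => ‖c j‖ - (if j = j₀ then ‖c j₀‖ else 0)) (‖b‖ - ‖c j₀‖) :=
    hcn.sub (hasSum_ite_eq j₀ ‖c j₀‖)
  have heq : (fun j => ‖c j - (if j = j₀ then c j₀ else 0)‖)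
      = fun j => ‖c j‖ - (if j = j₀ then ‖c j₀‖ else 0) := by
    funext j; by_cases h : j = j₀ <;> simp [h]
  have h2' : HasSum (fun j => ‖c j - (if j = j₀ then c j₀ else 0)‖) (‖b‖ - ‖c j₀‖) := by
    rw [heq]; exact h2
  have key : ‖b - c j₀‖ ≤ ‖b‖ - ‖c j₀‖ := by
    calc ‖b - c j₀‖ = ‖∑' j, (c j - (if j = j₀ then c j₀ else 0))‖ := by rw [h1.tsum_eq]
    _ ≤ ∑' j, ‖c j - (if j = j₀ then c j₀ else 0)‖ := norm_tsum_le_tsum_norm h2'.summable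
    _ = ‖b‖ - ‖c j₀‖ := h2'.tsum_eq
  have tri : ‖b‖ ≤ ‖c j₀‖ + ‖b - c j₀‖ := by
    calc ‖b‖ = ‖c j₀ + (b - c j₀)‖ := by congr 1; abel
    _ ≤ ‖c j₀‖ + ‖b - c j₀‖ := norm_add_le _ _
  have hmain : ‖b‖ = ‖c j₀‖ + ‖b - c j₀‖ := by linarith
  refine ⟨hmain, ?_, ?_⟩
  · have := hasSum_sum_of_ne_finset_zero
      (s := ({0, 1} : Finset ℕ)) (L := SummationFilter.unconditional ℕ)
      (f := fun j => if j = 0 then c j₀ else if j = 1 then b - c j₀ else 0)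
      (by intro j hj; simp only [Finset.mem_insert, Finset.mem_singleton] at hj
          push_neg at hj
          simp [hj.1, hj.2])
    simpa using this
  · have := hasSum_sum_of_ne_finset_zero
      (s := ({0, 1} : Finset ℕ)) (L := SummationFilter.unconditional ℕ)
      (f := fun j => ‖if j = 0 then c j₀ else if j = 1 then b - c j₀ else 0‖)
      (by intro j hj; simp only [Finset.mem_insert, Finset.mem_singleton] at hj
          push_neg at hj
          simp [hj.1, hj.2])
    simpa [hmain] using this
end

section
/- Let (G, +, ν) be a complete abelian normed group and let (b_j)_{j≥1} be a sequence in G with b_{j+1} ⪯ b_j for all j (a pseudo-nonincreasing sequence). Then the series ∑_j (b_j − b_{j+1}) converges absolutely in ν, the sequence (b_j) converges in norm to some b_∞ ∈ G, and for every j the sequence (b_∞, b_j − b_{j+1}, b_{j+1} − b_{j+2}, …) is a pseudo-decomposition of b_j. -/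
open Filter Topology

lemma key {G : Type*} [NormedAddCommGroup G] {x b : G} (h : PseudoLE x b) :
    ‖b‖ = ‖x‖ + ‖b - x‖ := by
  obtain ⟨a, ⟨hs, hn⟩, k, hk⟩ := h
  subst hk
  have h1 : HasSum (Function.update a k 0) (b - a k) := by
    simpa [neg_add_eq_sub] using hs.update k 0
  have h2 : HasSum (fun i => ‖Function.update a k 0 i‖) (‖b‖ - ‖a k‖) := by
    have h := hn.update k 0
    have he : Function.update (fun j => ‖a j‖) k 0 = fun i => ‖Function.update a k 0 i‖ := by
      funext i
      rcases eq_or_ne i k with rfl | hik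
      · simp
      · simp [Function.update_of_ne hik]
    rw [he] at h
    simpa [neg_add_eq_sub] using h
  have hle : ‖b - a k‖ ≤ ‖b‖ - ‖a k‖ := by
    have := norm_tsum_le_tsum_norm h2.summable
    rwa [h1.tsum_eq, h2.tsum_eq] at this
  have htri : ‖b‖ - ‖a k‖ ≤ ‖b - a k‖ := norm_sub_norm_le b (a k)
  linarith

theorem pseudo_nonincreasing_limit {G : Type*} [NormedAddCommGroup G] [CompleteSpace G]
    (b : ℕ → G) (hmono : ∀ j, PseudoLE (b (j + 1)) (b j)) :
    Summable (fun j => ‖b j - b (j + 1)‖) ∧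
      ∃ binf : G, Tendsto b atTop (𝓝 binf) ∧
        ∀ j, IsPseudoDecomp
          (fun r => match r with
            | 0 => binf
            | Nat.succ i => b (j + i) - b (j + i + 1)) (b j) := by
  have hkey : ∀ j, ‖b j - b (j + 1)‖ = ‖b j‖ - ‖b (j + 1)‖ := by
    intro j; have := key (hmono j); linarith
  have hsummable : Summable (fun j => ‖b j - b (j + 1)‖) := by
    apply summable_of_sum_range_le (c := ‖b 0‖) (fun j => norm_nonneg _)
    intro n
    have hts : ∑ i ∈ Finset.range n, ‖b i - b (i + 1)‖ = ‖b 0‖ - ‖b n‖ := by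
      simp_rw [hkey]; exact Finset.sum_range_sub' (fun i => ‖b i‖) n
    rw [hts]; have := norm_nonneg (b n); linarith
  refine ⟨hsummable, ?_⟩
  set T : G := ∑' j, (b j - b (j + 1)) with hTdef
  have hT : HasSum (fun j => b j - b (j + 1)) T := hsummable.of_norm.hasSum
  have hps : ∀ n, ∑ i ∈ Finset.range n, (b i - b (i + 1)) = b 0 - b n :=
    fun n => Finset.sum_range_sub' b n
  have htend0 : Tendsto (fun n => b 0 - b n) atTop (𝓝 T) := by
    have := (hasSum_iff_tendsto_nat_of_summable_norm hsummable).1 hT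
    simpa [hps] using this
  have htend : Tendsto b atTop (𝓝 (b 0 - T)) := by
    have : Tendsto (fun n => b 0 - (b 0 - b n)) atTop (𝓝 (b 0 - T)) :=
      tendsto_const_nhds.sub htend0
    simpa using this
  refine ⟨b 0 - T, htend, ?_⟩
  set binf : G := b 0 - T with hbinf
  have hnormtend : Tendsto (fun n => ‖b n‖) atTop (𝓝 ‖binf‖) := htend.norm
  intro j
  -- tail sums
  have htail_summable : Summable (fun i => ‖b (j + i) - b (j + i + 1)‖) := by
    have := (summable_nat_add_iff j).2 hsummable
    simpa [add_comm] using this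
  have htailps : ∀ n, ∑ i ∈ Finset.range n, (b (j + i) - b (j + i + 1)) = b j - b (j + n) := by
    intro n
    simpa [add_assoc] using Finset.sum_range_sub' (fun i => b (j + i)) n
  have htailnormps : ∀ n, ∑ i ∈ Finset.range n, ‖b (j + i) - b (j + i + 1)‖
      = ‖b j‖ - ‖b (j + n)‖ := by
    intro n
    simp_rw [hkey]
    simpa [add_assoc] using Finset.sum_range_sub' (fun i => ‖b (j + i)‖) n
  have hbjtend : Tendsto (fun n => b (j + n)) atTop (𝓝 binf) := by
    have := htend.comp (tendsto_add_atTop_nat j)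
    simpa [Function.comp_def, add_comm] using this
  have htail : HasSum (fun i => b (j + i) - b (j + i + 1)) (b j - binf) := by
    rw [hasSum_iff_tendsto_nat_of_summable_norm htail_summable]
    simp_rw [htailps]
    exact tendsto_const_nhds.sub hbjtend
  have htailnorm : HasSum (fun i => ‖b (j + i) - b (j + i + 1)‖) (‖b j‖ - ‖binf‖) := by
    rw [hasSum_iff_tendsto_nat_of_nonneg (fun i => norm_nonneg _)]
    simp_rw [htailnormps]
    exact tendsto_const_nhds.sub (hbjtend.norm)
  set f : ℕ → G := (fun r => match r with
            | 0 => binf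
            | Nat.succ i => b (j + i) - b (j + i + 1)) with hf
  constructor
  · have h1 : HasSum (fun n => f (n + 1)) (b j - binf) := htail
    have := (hasSum_nat_add_iff (f := f) 1).1 h1
    simpa [hf] using this
  · have h1 : HasSum (fun n => ‖f (n + 1)‖) (‖b j‖ - ‖binf‖) := htailnorm
    have := (hasSum_nat_add_iff (f := fun r => ‖f r‖) 1).1 h1
    simpa [hf] using this
end

section
/- Let (G, +, ν) be a complete abelian normed group, b ∈ G, (b_j)_{j≥1} a pseudo-decomposition of b, and for each j let (b_{j,i})_{i≥1} be a pseudo-decomposition of b_j. Then, for any bijection r ↦ (j(r), i(r)) from ℕ to ℕ×ℕ, the sequence a_r := b_{j(r), i(r)} is a pseudo-decomposition of b. -/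
open Filter Topology

/-!
Summing the norms fiberwise shows that `(j, i) ↦ ‖b_{j,i}‖` sums to `∑ ‖b_j‖ = ‖b‖`. In particular
the double family is absolutely summable, so in a complete group it is summable, and its sum is
then computed fiberwise as `∑ b_j = b`. Reindexing along a bijection `ℕ ≃ ℕ × ℕ` preserves both
sums.
-/

theorem Summable.hasSum_of_prod_fiberwise {α β γ : Type*} [AddCommMonoid α] [TopologicalSpace α]
    [ContinuousAdd α] [T3Space α] {f : β × γ → α} {g : β → α} {a : α} (hf : Summable f)
    (hfib : ∀ b, HasSum (fun c => f (b, c)) (g b)) (hg : HasSum g a) : HasSum f a := by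
  obtain ⟨s, hs⟩ := hf
  rwa [(hs.prod_fiberwise hfib).unique hg] at hs

theorem hasSum_prod_of_nonneg {β γ : Type*} {f : β × γ → ℝ} {g : β → ℝ} {a : ℝ} (hf : 0 ≤ f)
    (hfib : ∀ b, HasSum (fun c => f (b, c)) (g b)) (hg : HasSum g a) : HasSum f a := by
  refine Summable.hasSum_of_prod_fiberwise ?_ hfib hg
  rw [summable_prod_of_nonneg hf]
  exact ⟨fun b => (hfib b).summable, by simpa only [(hfib _).tsum_eq] using hg.summable⟩

theorem hasSum_prod_of_summable_norm {β γ G : Type*} [NormedAddCommGroup G] [CompleteSpace G]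
    {f : β × γ → G} {g : β → G} {a : G} (hf : Summable fun p => ‖f p‖)
    (hfib : ∀ b, HasSum (fun c => f (b, c)) (g b)) (hg : HasSum g a) : HasSum f a :=
  hf.of_norm.hasSum_of_prod_fiberwise hfib hg

theorem pseudoDecomp_iterate {G : Type*} [NormedAddCommGroup G] [CompleteSpace G]
    (b : G) (c₀ : ℕ → G) (hb : IsPseudoDecomp c₀ b)
    (c : ℕ → ℕ → G) (hc : ∀ j, IsPseudoDecomp (c j) (c₀ j))
    (e : ℕ ≃ ℕ × ℕ) :
    IsPseudoDecomp (fun r => c (e r).1 (e r).2) b := by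
  have hnorm : HasSum (fun p : ℕ × ℕ => ‖c p.1 p.2‖) ‖b‖ :=
    hasSum_prod_of_nonneg (fun _ => norm_nonneg _) (fun j => (hc j).2) hb.2
  have hsum : HasSum (fun p : ℕ × ℕ => c p.1 p.2) b :=
    hasSum_prod_of_summable_norm hnorm.summable (fun j => (hc j).1) hb.1
  exact ⟨e.hasSum_iff.mpr hsum, e.hasSum_iff.mpr hnorm⟩
end

section
/- Let (G, +, ν) be a complete abelian normed group, S ⊆ G with 0 ∈ S, and define q as the infimum of sup_j ν(a_j) over decompositions (a_j) of b into elements of S. If q(b) < ∞, then for every ε > 0 there exists b₁ ⪯ b with b₁ ∈ S such that q(b) ≤ q(b₁) ≤ ν(b₁) ≤ q(b) + ε and q(b − b₁) ≤ q(b₁). -/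
open Filter Topology ENNReal NNReal

/-- A decomposition of `b` is a pseudo-decomposition whose terms lie in `S`. -/
def IsDecomp {G : Type*} [NormedAddCommGroup G] (S : Set G) (a : ℕ → G) (b : G) : Prop :=
  (∀ j, a j ∈ S) ∧ HasSum a b ∧ HasSum (fun j => ‖a j‖) ‖b‖

/-- `q(b)`: infimum over decompositions of `b` of the sup of the norms of the terms. -/
noncomputable def qval {G : Type*} [NormedAddCommGroup G] (S : Set G) (b : G) : ℝ≥0∞ :=
  sInf {m : ℝ≥0∞ | ∃ a : ℕ → G, IsDecomp S a b ∧ m = ⨆ j, (‖a j‖₊ : ℝ≥0∞)}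

section Aux

variable {G : Type*} [NormedAddCommGroup G]

lemma qval_le_nnnorm (S : Set G) (h0 : (0:G) ∈ S) {x : G} (hx : x ∈ S) :
    qval S x ≤ (‖x‖₊ : ℝ≥0∞) := by
  have hdec : IsDecomp S (fun j => if j = 0 then x else 0) x := by
    refine ⟨fun j => by by_cases h : j = 0 <;> simp [h, hx, h0], hasSum_ite_eq 0 x, ?_⟩
    have he : (fun j : ℕ => ‖if j = 0 then x else 0‖) = fun j => if j = 0 then ‖x‖ else 0 := by
      funext j; split <;> simp
    rw [he]; exact hasSum_ite_eq 0 ‖x‖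
  refine le_trans (sInf_le ⟨_, hdec, rfl⟩) ?_
  exact iSup_le fun j => by by_cases h : j = 0 <;> simp [h]

lemma qval_zero_le (S : Set G) (h0 : (0:G) ∈ S) : qval S 0 ≤ 0 := by
  simpa using qval_le_nnnorm S h0 h0

lemma norm_sub_term {a : ℕ → G} {b : G} (ha : HasSum a b)
    (hn : HasSum (fun j => ‖a j‖) ‖b‖) (j₀ : ℕ) :
    ‖b - a j₀‖ = ‖b‖ - ‖a j₀‖ := by
  have h1 : HasSum (fun j => if j = j₀ then 0 else a j) (b - a j₀) := by
    have h2 := hasSum_ite_eq j₀ (a j₀)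
    have h3 := ha.sub h2
    convert h3 using 1
    funext j; by_cases h : j = j₀ <;> simp [h]
  have h2 : HasSum (fun j => if j = j₀ then (0:ℝ) else ‖a j‖) (‖b‖ - ‖a j₀‖) := by
    have h2 := hasSum_ite_eq j₀ ‖a j₀‖
    have h3 := hn.sub h2
    convert h3 using 1
    case e'_3 => exact rfl
    funext j; by_cases h : j = j₀ <;> simp [h]
  have hfe : (fun j : ℕ => ‖if j = j₀ then 0 else a j‖)
      = fun j => if j = j₀ then (0:ℝ) else ‖a j‖ := by
    funext j; split <;> simp
  have hs : Summable fun j : ℕ => ‖if j = j₀ then 0 else a j‖ := by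
    rw [hfe]; exact h2.summable
  have hle : ‖b - a j₀‖ ≤ ‖b‖ - ‖a j₀‖ := by
    calc ‖b - a j₀‖ = ‖∑' j : ℕ, if j = j₀ then 0 else a j‖ := by rw [h1.tsum_eq]
      _ ≤ ∑' j : ℕ, ‖if j = j₀ then 0 else a j‖ := norm_tsum_le_tsum_norm hs
      _ = ‖b‖ - ‖a j₀‖ := by rw [hfe, h2.tsum_eq]
  have hge : ‖b‖ - ‖a j₀‖ ≤ ‖b - a j₀‖ := norm_sub_norm_le b (a j₀)
  linarith

lemma decomp_remove (S : Set G) (h0 : (0:G) ∈ S) {a : ℕ → G} {b : G}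
    (hd : IsDecomp S a b) (j₀ : ℕ) :
    IsDecomp S (fun j => if j = j₀ then 0 else a j) (b - a j₀) := by
  obtain ⟨hS, ha, hn⟩ := hd
  have h1 : HasSum (fun j => if j = j₀ then 0 else a j) (b - a j₀) := by
    have h2 := hasSum_ite_eq j₀ (a j₀)
    have h3 := ha.sub h2
    convert h3 using 1
    funext j; by_cases h : j = j₀ <;> simp [h]
  have h2 : HasSum (fun j => if j = j₀ then (0:ℝ) else ‖a j‖) (‖b‖ - ‖a j₀‖) := by
    have h2 := hasSum_ite_eq j₀ ‖a j₀‖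
    have h3 := hn.sub h2
    convert h3 using 1
    case e'_3 => exact rfl
    funext j; by_cases h : j = j₀ <;> simp [h]
  refine ⟨fun j => by by_cases h : j = j₀ <;> simp [h, h0, hS j], h1, ?_⟩
  have hfe : (fun j : ℕ => ‖if j = j₀ then 0 else a j‖)
      = fun j => if j = j₀ then (0:ℝ) else ‖a j‖ := by
    funext j; split <;> simp
  rw [hfe, norm_sub_term ha hn j₀]
  exact h2

/-- Key merging lemma: if `x` has a pseudo-decomposition each of whose terms admits a
decomposition with norms bounded by `M`, then `qval S x ≤ M`. -/
lemma qval_le_of_forall_decomp {G : Type*} [NormedAddCommGroup G] [CompleteSpace G] (S : Set G)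
    {a : ℕ → G} {x : G} (ha : HasSum a x) (hn : HasSum (fun j => ‖a j‖) ‖x‖)
    (M : ℝ≥0∞) (hc : ∀ j, ∃ c : ℕ → G, IsDecomp S c (a j) ∧ (⨆ k, (‖c k‖₊ : ℝ≥0∞)) ≤ M) :
    qval S x ≤ M := by
  choose c hcdec hcle using hc
  set f : ℕ × ℕ → G := fun p => c p.1 p.2 with hf
  have hrow : ∀ j, HasSum (fun k => ‖f (j, k)‖) ‖a j‖ := fun j => (hcdec j).2.2
  have hgs : Summable fun p : ℕ × ℕ => ‖f p‖ := by
    rw [summable_prod_of_nonneg (fun p => norm_nonneg _)]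
    refine ⟨fun j => (hrow j).summable, ?_⟩
    have : (fun j : ℕ => ∑' k : ℕ, ‖f (j, k)‖) = fun j => ‖a j‖ := by
      funext j; exact (hrow j).tsum_eq
    rw [this]; exact hn.summable
  have hfs : Summable f := hgs.of_norm
  have htsum : ∑' p, f p = x := by
    rw [Summable.tsum_prod' hfs (fun j => ((hcdec j).2.1).summable)]
    calc ∑' (j : ℕ) (k : ℕ), f (j, k) = ∑' j, a j := by
          congr 1; funext j; exact ((hcdec j).2.1).tsum_eq
      _ = x := ha.tsum_eq
  have hF : HasSum f x := hfs.hasSum_iff.mpr htsum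
  have hGtsum : ∑' p, ‖f p‖ = ‖x‖ := by
    rw [Summable.tsum_prod' hgs (fun j => (hrow j).summable)]
    calc ∑' (j : ℕ) (k : ℕ), ‖f (j, k)‖ = ∑' j, ‖a j‖ := by
          congr 1; funext j; exact (hrow j).tsum_eq
      _ = ‖x‖ := hn.tsum_eq
  have hG : HasSum (fun p => ‖f p‖) ‖x‖ := hgs.hasSum_iff.mpr hGtsum
  let e : ℕ ≃ ℕ × ℕ := (Denumerable.eqv (ℕ × ℕ)).symm
  have hd1 : HasSum (f ∘ e) x := (e.hasSum_iff).mpr hF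
  have hd2 : HasSum ((fun p => ‖f p‖) ∘ e) ‖x‖ := (e.hasSum_iff).mpr hG
  have hd2' : HasSum (fun n => ‖(f ∘ e) n‖) ‖x‖ := hd2
  have hdec : IsDecomp S (f ∘ e) x := ⟨fun n => (hcdec (e n).1).1 (e n).2, hd1, hd2'⟩
  refine le_trans (sInf_le ⟨f ∘ e, hdec, rfl⟩) (iSup_le fun n => ?_)
  exact le_trans (le_iSup (fun k => (‖c (e n).1 k‖₊ : ℝ≥0∞)) (e n).2) (hcle (e n).1)

/-- `qval` of a sum is at most the sup of the `qval`s of the terms of any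
pseudo-decomposition. -/
lemma qval_le_iSup_qval {G : Type*} [NormedAddCommGroup G] [CompleteSpace G] (S : Set G)
    {a : ℕ → G} {x : G} (ha : HasSum a x) (hn : HasSum (fun j => ‖a j‖) ‖x‖) :
    qval S x ≤ ⨆ j, qval S (a j) := by
  by_cases htop : (⨆ j, qval S (a j)) = ⊤
  · simp [htop]
  refine ENNReal.le_of_forall_pos_le_add fun δ hδ _ => ?_
  refine qval_le_of_forall_decomp S ha hn _ fun j => ?_
  have hj : qval S (a j) < ⊤ :=
    lt_of_le_of_lt (le_iSup (fun j => qval S (a j)) j) (lt_top_iff_ne_top.mpr htop)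
  have hlt : qval S (a j) < qval S (a j) + δ :=
    ENNReal.lt_add_right hj.ne (by exact_mod_cast hδ.ne')
  obtain ⟨m, hm, hmlt⟩ := sInf_lt_iff.mp hlt
  obtain ⟨cj, hcj, rfl⟩ := hm
  exact ⟨cj, hcj, le_trans hmlt.le (add_le_add_left (le_iSup (fun j => qval S (a j)) j) _)⟩

end Aux

theorem qval_extraction {G : Type*} [NormedAddCommGroup G] [CompleteSpace G]
    (S : Set G) (h0 : (0 : G) ∈ S) (b : G) (hq : qval S b < ⊤) :
    ∀ ε > (0:ℝ), ∃ b₁ : G, b₁ ∈ S ∧ PseudoLE b₁ b ∧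
      qval S b ≤ qval S b₁ ∧ qval S b₁ ≤ (‖b₁‖₊ : ℝ≥0∞) ∧
      (‖b₁‖₊ : ℝ≥0∞) ≤ qval S b + ENNReal.ofReal ε ∧
      qval S (b - b₁) ≤ qval S b₁ := by
  intro ε hε
  -- choose a decomposition with sup of norms ≤ qval S b + ε
  have hlt : qval S b < qval S b + ENNReal.ofReal ε :=
    ENNReal.lt_add_right hq.ne (by simp [ENNReal.ofReal_pos.mpr hε, ne_of_gt])
  obtain ⟨m, hm, hmlt⟩ := sInf_lt_iff.mp hlt
  obtain ⟨a, hadec, rfl⟩ := hm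
  obtain ⟨hS, ha, hn⟩ := hadec
  have hterm : ∀ j, (‖a j‖₊ : ℝ≥0∞) ≤ qval S b + ENNReal.ofReal ε :=
    fun j => le_trans (le_iSup (fun j => (‖a j‖₊ : ℝ≥0∞)) j) hmlt.le
  -- the function j ↦ qval S (a j) attains its sup
  set Q : ℕ → ℝ≥0∞ := fun j => qval S (a j) with hQ
  have hQle : ∀ j, Q j ≤ (‖a j‖₊ : ℝ≥0∞) := fun j => qval_le_nnnorm S h0 (hS j)
  have hmax : ∃ j₀, ∀ j, Q j ≤ Q j₀ := by
    by_cases hall : ∀ j, Q j = 0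
    · exact ⟨0, fun j => by simp [hall j]⟩
    push_neg at hall
    obtain ⟨j₁, hj₁⟩ := hall
    have ht : (0:ℝ≥0∞) < Q j₁ := pos_iff_ne_zero.mpr hj₁
    -- norms tend to 0
    have hn0 : Tendsto (fun j => (‖a j‖₊ : ℝ≥0∞)) atTop (𝓝 0) := by
      have h1 : Tendsto (fun j => ‖a j‖) atTop (𝓝 0) := hn.summable.tendsto_atTop_zero
      have h2 := ENNReal.tendsto_ofReal h1
      simpa [enorm_eq_nnnorm] using h2
    have hev : ∀ᶠ j in atTop, (‖a j‖₊ : ℝ≥0∞) < Q j₁ := hn0.eventually_lt_const ht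
    obtain ⟨N, hN⟩ := hev.exists_forall_of_atTop
    have hj₁N : j₁ < N := by
      by_contra h
      exact absurd (lt_of_le_of_lt (hQle j₁) (hN j₁ (le_of_not_gt h))) (lt_irrefl _)
    obtain ⟨j₀, hj₀mem, hj₀max⟩ :=
      Finset.exists_max_image (Finset.range N) Q ⟨j₁, Finset.mem_range.mpr hj₁N⟩
    refine ⟨j₀, fun j => ?_⟩
    by_cases hj : j < N
    · exact hj₀max j (Finset.mem_range.mpr hj)
    · exact le_trans (le_of_lt (lt_of_le_of_lt (hQle j) (hN j (le_of_not_gt hj))))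
        (hj₀max j₁ (Finset.mem_range.mpr hj₁N))
  obtain ⟨j₀, hj₀⟩ := hmax
  -- first prove qval S (b - a j₀) ≤ qval S (a j₀)
  have hdec' := decomp_remove S h0 ⟨hS, ha, hn⟩ j₀
  have hrest : qval S (b - a j₀) ≤ qval S (a j₀) := by
    refine le_trans (qval_le_iSup_qval S hdec'.2.1 hdec'.2.2) (iSup_le fun j => ?_)
    by_cases h : j = j₀
    · simpa [h] using (qval_zero_le S h0).trans zero_le
    · simpa [h] using hj₀ j
  -- now prove qval S b ≤ qval S (a j₀) via the two-term pseudo-decomposition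
  have hnormeq : ‖b - a j₀‖ = ‖b‖ - ‖a j₀‖ := norm_sub_term ha hn j₀
  set d : ℕ → G := fun n => if n = 0 then a j₀ else if n = 1 then b - a j₀ else 0 with hd
  have hde : d = fun n => (if n = 0 then a j₀ else 0) + (if n = 1 then b - a j₀ else 0) := by
    funext n; rcases n with _ | _ | n <;> simp [hd]
  have hdsum : HasSum d b := by
    rw [hde]
    have h1 := (hasSum_ite_eq 0 (a j₀)).add (hasSum_ite_eq 1 (b - a j₀))
    have h2 : a j₀ + (b - a j₀) = b := by abel
    rwa [h2] at h1
  have hdne : (fun n => ‖d n‖)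
      = fun n => (if n = 0 then ‖a j₀‖ else 0) + (if n = 1 then ‖b - a j₀‖ else 0) := by
    funext n; rcases n with _ | _ | n <;> simp [hd]
  have hdnsum : HasSum (fun n => ‖d n‖) ‖b‖ := by
    rw [hdne]
    have h1 := (hasSum_ite_eq 0 ‖a j₀‖).add (hasSum_ite_eq 1 ‖b - a j₀‖)
    have h2 : ‖a j₀‖ + ‖b - a j₀‖ = ‖b‖ := by rw [hnormeq]; linarith
    rwa [h2] at h1
  have hmain : qval S b ≤ qval S (a j₀) := by
    refine le_trans (qval_le_iSup_qval S hdsum hdnsum) (iSup_le fun n => ?_)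
    rcases n with _ | _ | n
    · simp [hd]
    · simpa [hd] using hrest
    · simpa [hd] using (qval_zero_le S h0).trans zero_le
  exact ⟨a j₀, hS j₀, ⟨a, ⟨ha, hn⟩, j₀, rfl⟩, hmain, qval_le_nnnorm S h0 (hS j₀),
    hterm j₀, hrest⟩
end

section
/- Abstract decomposition lemma: Let (G, +, ν) be a complete abelian normed group, S ⊆ G with 0 ∈ S. Assume (H1): for every sequence b₁ ⪰ b₂ ⪰ ⋯ in G (pseudo-nonincreasing), the norm-limit of (b_j) belongs to S; and (H2): there exist a second norm φ on G and a nondecreasing function η : [0,∞) → [0,∞) with η(s) → 0 as s → 0 such that φ(a) ≤ η(ν(a))·ν(a) for every a ∈ S. Then every b ∈ G admitting at least one decomposition into elements of S admits a decomposition into atoms. -/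
open Filter Topology

/-- `b` is an atom: `b ∈ S` and every decomposition of `b` is trivial. -/
def IsAtomIn {G : Type*} [NormedAddCommGroup G] (S : Set G) (b : G) : Prop :=
  b ∈ S ∧ ∀ a : ℕ → G, IsDecomp S a b → ∀ j, a j = 0 ∨ a j = b

section PtAux
variable {G : Type*} [NormedAddCommGroup G]

/-- `x` is a "part" of `y`: norms add. -/
def Pt (x y : G) : Prop := ‖x‖ + ‖y - x‖ = ‖y‖

lemma pt_self (y : G) : Pt y y := by simp [Pt]

lemma pt_zero (y : G) : Pt 0 y := by simp [Pt]

lemma pt_norm_le {x y : G} (h : Pt x y) : ‖x‖ ≤ ‖y‖ := by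
  have := norm_nonneg (y - x); unfold Pt at h; linarith

lemma pt_compl {x y : G} (h : Pt x y) : Pt (y - x) y := by
  have hxx : y - (y - x) = x := by abel
  unfold Pt at h ⊢; rw [hxx]; linarith

lemma pt_trans {x y z : G} (hxy : Pt x y) (hyz : Pt y z) : Pt x z := by
  unfold Pt at *
  have h1 : ‖z - x‖ ≤ ‖z - y‖ + ‖y - x‖ := by
    have h : z - x = (z - y) + (y - x) := by abel
    rw [h]; exact norm_add_le _ _
  have h2 : ‖z‖ ≤ ‖x‖ + ‖z - x‖ := by
    have h : z = x + (z - x) := by abel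
    nth_rewrite 1 [h]; exact norm_add_le _ _
  linarith

lemma hasSum_pair {H : Type*} [NormedAddCommGroup H] (u v : H) :
    HasSum (fun n => if n = 0 then u else if n = 1 then v else 0) (u + v) := by
  have h0 : HasSum (fun n : ℕ => if n = 0 then u else 0) u := hasSum_ite_eq 0 u
  have h1 : HasSum (fun n : ℕ => if n = 1 then v else 0) v := hasSum_ite_eq 1 v
  have h := h0.add h1
  convert h using 1
  funext n
  rcases n with _ | _ | n <;> simp

lemma isPseudoDecomp_pair {x b : G} (h : Pt x b) :
    IsPseudoDecomp (fun n => if n = 0 then x else if n = 1 then b - x else 0) b := by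
  constructor
  · have hs := hasSum_pair x (b - x)
    rwa [add_sub_cancel] at hs
  · have h2 := hasSum_pair (‖x‖) (‖b - x‖)
    rw [h] at h2
    convert h2 using 1
    case e'_3 => rfl
    funext n
    rcases n with _ | _ | n <;> simp

lemma pseudoLE_iff {x b : G} : PseudoLE x b ↔ Pt x b := by
  constructor
  · rintro ⟨a, ⟨hsum, hnorm⟩, j, rfl⟩
    classical
    have hupd : HasSum (Function.update a j 0) (0 - a j + b) := hsum.update j 0
    have hupdn : HasSum (Function.update (fun i => ‖a i‖) j 0) (0 - ‖a j‖ + ‖b‖) :=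
      hnorm.update j 0
    have hfun : (fun i => ‖Function.update a j 0 i‖)
        = Function.update (fun i => ‖a i‖) j 0 := by
      funext i
      by_cases hij : i = j <;> simp [Function.update, hij]
    have hsummable : Summable fun i => ‖Function.update a j 0 i‖ := by
      rw [hfun]; exact hupdn.summable
    have htsum1 : ∑' i, Function.update a j 0 i = b - a j := by
      rw [hupd.tsum_eq]; abel
    have htsum2 : ∑' i, ‖Function.update a j 0 i‖ = ‖b‖ - ‖a j‖ := by
      rw [hfun, hupdn.tsum_eq]; ring
    have hle := norm_tsum_le_tsum_norm hsummable
    rw [htsum1, htsum2] at hle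
    have htri : ‖b‖ ≤ ‖a j‖ + ‖b - a j‖ := by
      have h : b = a j + (b - a j) := by abel
      nth_rewrite 1 [h]; exact norm_add_le _ _
    unfold Pt; linarith
  · intro h
    exact ⟨_, isPseudoDecomp_pair h, 0, rfl⟩

lemma pt_chain {z : ℕ → G} (hz : ∀ k, Pt (z (k+1)) (z k)) :
    ∀ {k m}, k ≤ m → Pt (z m) (z k) := by
  intro k m hkm
  induction m, hkm using Nat.le_induction with
  | base => exact pt_self _
  | succ n hn ih => exact pt_trans (hz n) ih

lemma chain_limit [CompleteSpace G] {z : ℕ → G} (hz : ∀ k, Pt (z (k+1)) (z k)) :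
    ∃ L, Tendsto z atTop (𝓝 L) ∧ (∀ k, Pt L (z k)) ∧
      Tendsto (fun k => ‖z k‖) atTop (𝓝 ‖L‖) := by
  have hdiff : ∀ {k m}, k ≤ m → ‖z k - z m‖ = ‖z k‖ - ‖z m‖ := by
    intro k m hkm
    have := pt_chain hz hkm
    unfold Pt at this; linarith
  have hanti : Antitone fun k => ‖z k‖ := by
    apply antitone_nat_of_succ_le
    intro n; exact pt_norm_le (hz n)
  have hbdd : BddBelow (Set.range fun k => ‖z k‖) :=
    ⟨0, by rintro r ⟨k, rfl⟩; exact norm_nonneg _⟩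
  have hnt : Tendsto (fun k => ‖z k‖) atTop (𝓝 (⨅ k, ‖z k‖)) :=
    tendsto_atTop_ciInf hanti hbdd
  set l := ⨅ k, ‖z k‖ with hl
  have hcauchy : CauchySeq z := by
    rw [Metric.cauchySeq_iff]
    intro ε hε
    have hev : ∀ᶠ k in atTop, ‖z k‖ < l + ε := by
      apply hnt.eventually_lt_const; linarith
    obtain ⟨N, hN⟩ := hev.exists_forall_of_atTop
    refine ⟨N, fun m hm n hn => ?_⟩
    have hlle : ∀ k, l ≤ ‖z k‖ := fun k => ciInf_le hbdd k
    rcases le_total m n with h | h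
    · rw [dist_eq_norm, hdiff h]
      have := hN m hm; have := hlle n; linarith
    · rw [dist_eq_norm, norm_sub_rev, hdiff h]
      have := hN n hn; have := hlle m; linarith
  obtain ⟨L, hL⟩ := cauchySeq_tendsto_of_complete hcauchy
  have hnL : Tendsto (fun k => ‖z k‖) atTop (𝓝 ‖L‖) := hL.norm
  have hLl : ‖L‖ = l := tendsto_nhds_unique hnL hnt
  refine ⟨L, hL, fun k => ?_, hnL⟩
  have h1 : Tendsto (fun m => ‖z k - z m‖) atTop (𝓝 ‖z k - L‖) :=
    ((tendsto_const_nhds.sub hL).norm)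
  have h2 : Tendsto (fun m => ‖z k - z m‖) atTop (𝓝 (‖z k‖ - l)) := by
    have heq : ∀ᶠ m in atTop, ‖z k‖ - ‖z m‖ = ‖z k - z m‖ := by
      filter_upwards [eventually_ge_atTop k] with m hm
      exact (hdiff hm).symm
    exact Tendsto.congr' heq (tendsto_const_nhds.sub hnt)
  have h3 : ‖z k - L‖ = ‖z k‖ - l := tendsto_nhds_unique h1 h2
  unfold Pt; rw [h3, hLl]; ring

/-- decomposition into pieces of norm at most ε -/
def SmallDec (ε : ℝ) (z : G) : Prop :=
  ∃ a : ℕ → G, HasSum a z ∧ HasSum (fun i => ‖a i‖) ‖z‖ ∧ ∀ i, ‖a i‖ ≤ ε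

lemma smallDec_of_norm_le {ε : ℝ} {z : G} (h : ‖z‖ ≤ ε) : SmallDec ε z := by
  refine ⟨fun n => if n = 0 then z else 0, ?_, ?_, ?_⟩
  · simpa using hasSum_ite_eq 0 z
  · have h2 : HasSum (fun n : ℕ => if n = 0 then ‖z‖ else 0) ‖z‖ := hasSum_ite_eq 0 ‖z‖
    convert h2 using 1; funext n; by_cases hn : n = 0 <;> simp [hn]
  · intro i
    by_cases hi : i = 0 <;> simp [hi]
    · exact h
    · exact le_trans (norm_nonneg z) h

lemma hasSum_interleave {H : Type*} [NormedAddCommGroup H] {f g : ℕ → H} {u v : H}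
    (hf : HasSum f u) (hg : HasSum g v) :
    HasSum (fun n => if n % 2 = 0 then f (n / 2) else g (n / 2)) (u + v) := by
  apply HasSum.even_add_odd
  · convert hf using 1; funext k; simp [Nat.mul_div_cancel_left, Nat.mul_mod_right]
  · convert hg using 1; funext k
    have h1 : (2 * k + 1) % 2 = 1 := by omega
    have h2 : (2 * k + 1) / 2 = k := by omega
    simp [h1, h2]

lemma smallDec_add {ε : ℝ} {x z : G} (hpt : Pt x z) (hx : SmallDec ε x)
    (hy : SmallDec ε (z - x)) : SmallDec ε z := by
  obtain ⟨f, hf1, hf2, hf3⟩ := hx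
  obtain ⟨g, hg1, hg2, hg3⟩ := hy
  refine ⟨fun n => if n % 2 = 0 then f (n / 2) else g (n / 2), ?_, ?_, ?_⟩
  · have h := hasSum_interleave hf1 hg1
    rwa [add_sub_cancel] at h
  · have h := hasSum_interleave hf2 hg2
    unfold Pt at hpt
    rw [hpt] at h
    convert h using 1
    case e'_3 => rfl
    funext n; by_cases hn : n % 2 = 0 <;> simp [hn]
  · intro i
    by_cases hi : i % 2 = 0 <;> simp [hi]
    · exact hf3 _
    · exact hg3 _

lemma phi_finset_sum (φ : G → ℝ) (hφadd : ∀ a b : G, φ (a + b) ≤ φ a + φ b)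
    (hφz : φ 0 = 0) (s : Finset ℕ) (f : ℕ → G) :
    φ (∑ i ∈ s, f i) ≤ ∑ i ∈ s, φ (f i) := by
  classical
  induction s using Finset.cons_induction with
  | empty => simp [hφz]
  | cons i s hi ih =>
    rw [Finset.sum_cons, Finset.sum_cons]
    exact le_trans (hφadd _ _) (by linarith)

lemma smallDec_bound {φ : G → ℝ} {η : ℝ → ℝ}
    (hφadd : ∀ a b : G, φ (a + b) ≤ φ a + φ b) (hφz : φ 0 = 0)
    (hφle : ∀ x : G, φ x ≤ η ‖x‖ * ‖x‖)
    (hηmono : MonotoneOn η (Set.Ici 0)) (hηnn : ∀ s ≥ (0:ℝ), 0 ≤ η s)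
    (hηlim : Tendsto η (𝓝[≥] 0) (𝓝 0))
    {ε : ℝ} (hε : 0 ≤ ε) {z : G} (h : SmallDec ε z) :
    φ z ≤ η ε * ‖z‖ := by
  obtain ⟨a, ha, han, hab⟩ := h
  have hpart : Tendsto (fun n => ∑ i ∈ Finset.range n, a i) atTop (𝓝 z) :=
    ha.tendsto_sum_nat
  have htail : Tendsto (fun n => z - ∑ i ∈ Finset.range n, a i) atTop (𝓝 0) := by
    have h := tendsto_const_nhds (x := z) (f := atTop (α := ℕ)) |>.sub hpart
    simpa using h
  have htailn : Tendsto (fun n => ‖z - ∑ i ∈ Finset.range n, a i‖) atTop (𝓝 0) := by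
    simpa using htail.norm
  have htailn' : Tendsto (fun n => ‖z - ∑ i ∈ Finset.range n, a i‖) atTop (𝓝[≥] 0) := by
    apply tendsto_nhdsWithin_of_tendsto_nhds_of_eventually_within _ htailn
    exact Eventually.of_forall fun n => norm_nonneg _
  have hηtail : Tendsto (fun n => η ‖z - ∑ i ∈ Finset.range n, a i‖ *
      ‖z - ∑ i ∈ Finset.range n, a i‖) atTop (𝓝 0) := by
    have h := (hηlim.comp htailn').mul htailn
    simpa using h
  have key : ∀ n, φ z ≤ η ε * ‖z‖ +
      η ‖z - ∑ i ∈ Finset.range n, a i‖ * ‖z - ∑ i ∈ Finset.range n, a i‖ := by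
    intro n
    have h1 : φ z ≤ φ (∑ i ∈ Finset.range n, a i) + φ (z - ∑ i ∈ Finset.range n, a i) := by
      have h : z = (∑ i ∈ Finset.range n, a i) + (z - ∑ i ∈ Finset.range n, a i) := by abel
      nth_rewrite 1 [h]; exact hφadd _ _
    have h2 : φ (∑ i ∈ Finset.range n, a i) ≤ ∑ i ∈ Finset.range n, φ (a i) :=
      phi_finset_sum φ hφadd hφz _ _
    have h3 : ∀ i, φ (a i) ≤ η ε * ‖a i‖ := by
      intro i
      refine le_trans (hφle (a i)) ?_
      have h := hηmono (Set.mem_Ici.mpr (norm_nonneg _)) (Set.mem_Ici.mpr hε) (hab i)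
      exact mul_le_mul_of_nonneg_right h (norm_nonneg _)
    have h4 : ∑ i ∈ Finset.range n, φ (a i) ≤ η ε * ∑ i ∈ Finset.range n, ‖a i‖ := by
      rw [Finset.mul_sum]; exact Finset.sum_le_sum fun i _ => h3 i
    have h5 : ∑ i ∈ Finset.range n, ‖a i‖ ≤ ‖z‖ :=
      sum_le_hasSum _ (fun i _ => norm_nonneg _) han
    have h6 : η ε * ∑ i ∈ Finset.range n, ‖a i‖ ≤ η ε * ‖z‖ :=
      mul_le_mul_of_nonneg_left h5 (hηnn ε hε)
    have h7 : φ (z - ∑ i ∈ Finset.range n, a i) ≤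
        η ‖z - ∑ i ∈ Finset.range n, a i‖ * ‖z - ∑ i ∈ Finset.range n, a i‖ := hφle _
    linarith
  have hlim : Tendsto (fun n => η ε * ‖z‖ +
      η ‖z - ∑ i ∈ Finset.range n, a i‖ * ‖z - ∑ i ∈ Finset.range n, a i‖) atTop
      (𝓝 (η ε * ‖z‖)) := by
    have h := (tendsto_const_nhds (x := η ε * ‖z‖) (f := atTop (α := ℕ))).add hηtail
    simpa using h
  exact ge_of_tendsto hlim (Eventually.of_forall key)

end PtAux

/-- Abstract decomposition lemma (Lemma 2.2). -/
theorem abstract_decomposition {G : Type*} [NormedAddCommGroup G] [CompleteSpace G]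
    (S : Set G) (h0 : (0 : G) ∈ S)
    (H1 : ∀ (b : ℕ → G) (L : G), (∀ j, PseudoLE (b (j + 1)) (b j)) →
      Tendsto b atTop (𝓝 L) → L ∈ S)
    (φ : G → ℝ) (hφ0 : ∀ a : G, φ a = 0 ↔ a = 0) (hφneg : ∀ a : G, φ (-a) = φ a)
    (hφadd : ∀ a b : G, φ (a + b) ≤ φ a + φ b)
    (η : ℝ → ℝ) (hηmono : MonotoneOn η (Set.Ici 0)) (hηnn : ∀ s ≥ (0:ℝ), 0 ≤ η s)
    (hηlim : Tendsto η (𝓝[≥] 0) (𝓝 0))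
    (H2 : ∀ a ∈ S, φ a ≤ η ‖a‖ * ‖a‖)
    (b : G) (hb : ∃ a : ℕ → G, IsDecomp S a b) :
    ∃ a : ℕ → G, IsDecomp S a b ∧ ∀ j, IsAtomIn S (a j) := by
  classical
  -- Every element of G lies in S (apply H1 to a constant sequence).
  have hS : ∀ x : G, x ∈ S := by
    intro x
    exact H1 (fun _ => x) x (fun j => pseudoLE_iff.mpr (pt_self x)) tendsto_const_nhds
  have hφz : φ 0 = 0 := (hφ0 0).mpr rfl
  have hφnn : ∀ x : G, 0 ≤ φ x := by
    intro x
    have h := hφadd x (-x)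
    rw [add_neg_cancel, hφz, hφneg] at h
    linarith
  have hφpos : ∀ x : G, x ≠ 0 → 0 < φ x := by
    intro x hx
    rcases lt_or_eq_of_le (hφnn x) with h | h
    · exact h
    · exact absurd ((hφ0 x).mp h.symm) hx
  have hφle : ∀ x : G, φ x ≤ η ‖x‖ * ‖x‖ := fun x => H2 x (hS x)
  have hbound : ∀ {ε : ℝ}, 0 ≤ ε → ∀ {z : G}, SmallDec ε z → φ z ≤ η ε * ‖z‖ :=
    fun {ε} hε {z} h => smallDec_bound hφadd hφz hφle hηmono hηnn hηlim hε h
  have hnotsmall : ∀ {ε : ℝ} {z : G}, ¬ SmallDec ε z → ε < ‖z‖ := by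
    intro ε z h
    by_contra hc
    push_neg at hc
    exact h (smallDec_of_norm_le hc)
  -- 0 is an atom
  have hatom0 : IsAtomIn S 0 := by
    refine ⟨h0, fun a ha j => Or.inl ?_⟩
    obtain ⟨-, -, hn⟩ := ha
    rw [norm_zero] at hn
    have h1 := le_hasSum hn j (fun i _ => norm_nonneg _)
    have h2 := norm_nonneg (a j)
    rw [← norm_le_zero_iff]
    linarith
  -- Claim A: every nonzero element has a nonzero atom part.
  have claimA : ∀ r : G, r ≠ 0 → ∃ w : G, IsAtomIn S w ∧ Pt w r ∧ w ≠ 0 := by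
    intro r hr
    have hrn : 0 < ‖r‖ := norm_pos_iff.mpr hr
    have hφr : 0 < φ r := hφpos r hr
    obtain ⟨ε, hε0, hηε⟩ : ∃ ε : ℝ, 0 < ε ∧ η ε * ‖r‖ < φ r := by
      have hc : (0:ℝ) < φ r / ‖r‖ := div_pos hφr hrn
      have hev : ∀ᶠ s in 𝓝[≥] (0:ℝ), η s < φ r / ‖r‖ := hηlim.eventually_lt_const hc
      rw [eventually_nhdsWithin_iff, Metric.eventually_nhds_iff] at hev
      obtain ⟨δ, hδ, hδ2⟩ := hev
      refine ⟨δ/2, by linarith, ?_⟩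
      have h1 : η (δ/2) < φ r / ‖r‖ := by
        refine hδ2 ?_ (Set.mem_Ici.mpr (by positivity))
        rw [Real.dist_eq, sub_zero, abs_of_nonneg (by positivity)]
        linarith
      calc η (δ/2) * ‖r‖ < (φ r / ‖r‖) * ‖r‖ := by
            exact mul_lt_mul_of_pos_right h1 hrn
        _ = φ r := div_mul_cancel₀ _ (ne_of_gt hrn)
    have hne : ¬ SmallDec ε r := by
      intro h
      exact absurd (hbound hε0.le h) (not_le.mpr hηε)
    -- near-minimal-norm non-small part selection
    have step : ∀ (x : G), ¬ SmallDec ε x → ∀ δ : ℝ, 0 < δ →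
        ∃ w, Pt w x ∧ ¬ SmallDec ε w ∧ ∀ u, Pt u x → ¬ SmallDec ε u → ‖w‖ ≤ ‖u‖ + δ := by
      intro x hx δ hδ
      set A := {t : ℝ | ∃ w : G, Pt w x ∧ ¬ SmallDec ε w ∧ ‖w‖ = t} with hA
      have hAne : A.Nonempty := ⟨‖x‖, x, pt_self x, hx, rfl⟩
      obtain ⟨t, ⟨w, hw1, hw2, hw3⟩, ht⟩ := Real.lt_sInf_add_pos hAne hδ
      refine ⟨w, hw1, hw2, fun u hu1 hu2 => ?_⟩
      have hbddA : BddBelow A := ⟨0, by rintro s ⟨v, -, -, rfl⟩; exact norm_nonneg v⟩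
      have h := csInf_le hbddA (Set.mem_setOf.mpr ⟨u, hu1, hu2, rfl⟩)
      rw [hw3]
      linarith
    choose! f hf1 hf2 hf3 using step
    set z : ℕ → G := fun k => Nat.rec (motive := fun _ => G) r
      (fun k zk => f zk ((1/2)^k)) k with hzdef
    have hz0 : z 0 = r := rfl
    have hzs : ∀ k, z (k+1) = f (z k) ((1/2)^k) := fun k => rfl
    have hnots : ∀ k, ¬ SmallDec ε (z k) := by
      intro k
      induction k with
      | zero => rw [hz0]; exact hne
      | succ k ih => rw [hzs k]; exact hf2 _ ih _ (by positivity)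
    have hzpt : ∀ k, Pt (z (k+1)) (z k) := by
      intro k
      rw [hzs k]; exact hf1 _ (hnots k) _ (by positivity)
    have hzmin : ∀ k, ∀ u : G, Pt u (z k) → ¬ SmallDec ε u → ‖z (k+1)‖ ≤ ‖u‖ + (1/2)^k := by
      intro k u hu hsu
      rw [hzs k]; exact hf3 _ (hnots k) _ (by positivity) u hu hsu
    obtain ⟨L, hLt, hLpt, hLn⟩ := chain_limit hzpt
    have hεL : ε ≤ ‖L‖ :=
      ge_of_tendsto hLn (Eventually.of_forall fun k => (hnotsmall (hnots k)).le)
    have hL0 : L ≠ 0 := by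
      intro h
      rw [h, norm_zero] at hεL
      linarith
    have hLr : Pt L r := hz0 ▸ hLpt 0
    refine ⟨L, ⟨hS L, ?_⟩, hLr, hL0⟩
    intro a hdec j
    by_contra hcon
    push_neg at hcon
    obtain ⟨hj0, hjL⟩ := hcon
    have hx : Pt (a j) L := pseudoLE_iff.mp ⟨a, ⟨hdec.2.1, hdec.2.2⟩, j, rfl⟩
    have hy : Pt (L - a j) L := pt_compl hx
    have hyne : L - a j ≠ 0 := sub_ne_zero_of_ne (Ne.symm hjL)
    have key : ∀ u : G, Pt u L → ¬ SmallDec ε u → ‖L‖ ≤ ‖u‖ := by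
      intro u hu hus
      have hk : ∀ k, ‖L‖ ≤ ‖u‖ + (1/2)^k := by
        intro k
        have h1 : Pt u (z k) := pt_trans hu (hLpt k)
        have h2 := hzmin k u h1 hus
        have h3 : ‖L‖ ≤ ‖z (k+1)‖ := pt_norm_le (hLpt (k+1))
        linarith
      have hd : Tendsto (fun k : ℕ => ‖u‖ + (1/2)^k) atTop (𝓝 (‖u‖ + 0)) := by
        exact tendsto_const_nhds.add
          (tendsto_pow_atTop_nhds_zero_of_lt_one (by norm_num) (by norm_num))
      rw [add_zero] at hd
      exact ge_of_tendsto hd (Eventually.of_forall hk)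
    by_cases hsx : SmallDec ε (a j)
    · by_cases hsy : SmallDec ε (L - a j)
      · have hsL : SmallDec ε L := smallDec_add hx hsx hsy
        have hev : ∀ᶠ k in atTop, ‖z k‖ < ‖L‖ + ε := hLn.eventually_lt_const (by linarith)
        obtain ⟨k, hk⟩ := hev.exists
        have hzL : Pt L (z k) := hLpt k
        have hzLs : ‖z k - L‖ ≤ ε := by unfold Pt at hzL; linarith
        exact hnots k (smallDec_add hzL hsL (smallDec_of_norm_le hzLs))
      · have h1 := key (L - a j) hy hsy
        have h2 : ‖a j‖ ≤ 0 := by unfold Pt at hx; linarith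
        exact hj0 (norm_le_zero_iff.mp h2)
    · have h1 := key (a j) hx hsx
      have h2 : ‖L - a j‖ ≤ 0 := by unfold Pt at hx; linarith
      exact hyne (norm_le_zero_iff.mp h2)
  -- Greedy extraction of near-maximal atoms.
  have stepA : ∀ (x : G) (δ : ℝ), 0 < δ →
      ∃ w, IsAtomIn S w ∧ Pt w x ∧ ∀ u, IsAtomIn S u → Pt u x → ‖u‖ ≤ ‖w‖ + δ := by
    intro x δ hδ
    set A := {t : ℝ | ∃ w : G, IsAtomIn S w ∧ Pt w x ∧ ‖w‖ = t} with hA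
    have hAne : A.Nonempty := ⟨0, 0, hatom0, pt_zero x, norm_zero⟩
    have hAbdd : BddAbove A := ⟨‖x‖, by rintro t ⟨w, -, hw, rfl⟩; exact pt_norm_le hw⟩
    obtain ⟨t, ⟨w, hw1, hw2, hw3⟩, ht⟩ :=
      exists_lt_of_lt_csSup hAne (show sSup A - δ < sSup A by linarith)
    refine ⟨w, hw1, hw2, fun u hu1 hu2 => ?_⟩
    have h := le_csSup hAbdd (Set.mem_setOf.mpr ⟨u, hu1, hu2, rfl⟩)
    rw [← hw3] at ht
    linarith
  choose! g hg1 hg2 hg3 using stepA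
  set rs : ℕ → G := fun k => Nat.rec (motive := fun _ => G) b
    (fun k rk => rk - g rk ((1/2)^k)) k with hrsdef
  set as : ℕ → G := fun k => g (rs k) ((1/2)^k) with hasdef
  have hr0 : rs 0 = b := rfl
  have hrsucc : ∀ k, rs (k+1) = rs k - as k := fun k => rfl
  have hak : ∀ k, IsAtomIn S (as k) := fun k => hg1 _ _ (by positivity)
  have hapt : ∀ k, Pt (as k) (rs k) := fun k => hg2 _ _ (by positivity)
  have hnear : ∀ k, ∀ u : G, IsAtomIn S u → Pt u (rs k) → ‖u‖ ≤ ‖as k‖ + (1/2)^k :=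
    fun k => hg3 _ _ (by positivity)
  have hchain : ∀ k, Pt (rs (k+1)) (rs k) := by
    intro k
    rw [hrsucc k]
    exact pt_compl (hapt k)
  obtain ⟨R, hRt, hRpt, hRn⟩ := chain_limit hchain
  have hanorm : ∀ k, ‖as k‖ = ‖rs k‖ - ‖rs (k+1)‖ := by
    intro k
    have h := hapt k
    unfold Pt at h
    rw [hrsucc k]
    linarith
  have haz : Tendsto (fun k => ‖as k‖) atTop (𝓝 0) := by
    have h1 : Tendsto (fun k => ‖rs (k+1)‖) atTop (𝓝 ‖R‖) :=
      hRn.comp (tendsto_add_atTop_nat 1)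
    have h := hRn.sub h1
    rw [sub_self] at h
    exact h.congr fun k => (hanorm k).symm
  have hR0 : R = 0 := by
    by_contra hR
    obtain ⟨w, hw1, hw2, hw3⟩ := claimA R hR
    have hwn : 0 < ‖w‖ := norm_pos_iff.mpr hw3
    have hup : ∀ k, ‖w‖ ≤ ‖as k‖ + (1/2)^k := fun k =>
      hnear k w hw1 (pt_trans hw2 (hRpt k))
    have hd : Tendsto (fun k : ℕ => ‖as k‖ + (1/2)^k) atTop (𝓝 (0 + 0)) :=
      haz.add (tendsto_pow_atTop_nhds_zero_of_lt_one (by norm_num) (by norm_num))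
    rw [add_zero] at hd
    have := ge_of_tendsto hd (Eventually.of_forall hup)
    linarith
  rw [hR0, norm_zero] at hRn
  rw [hR0] at hRt
  have hpartial : ∀ n, ∑ i ∈ Finset.range n, as i = b - rs n := by
    intro n
    induction n with
    | zero => simp [hr0]
    | succ n ih => rw [Finset.sum_range_succ, ih, hrsucc n]; abel
  have hpnorm : ∀ n, ∑ i ∈ Finset.range n, ‖as i‖ = ‖b‖ - ‖rs n‖ := by
    intro n
    induction n with
    | zero => simp [hr0]
    | succ n ih => rw [Finset.sum_range_succ, ih, hanorm n]; ring
  have hnormsum : HasSum (fun i => ‖as i‖) ‖b‖ := by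
    rw [hasSum_iff_tendsto_nat_of_nonneg (fun i => norm_nonneg _)]
    have h : Tendsto (fun n => ‖b‖ - ‖rs n‖) atTop (𝓝 (‖b‖ - 0)) :=
      tendsto_const_nhds.sub hRn
    rw [sub_zero] at h
    exact h.congr fun n => (hpnorm n).symm
  have hsummable : Summable as := Summable.of_norm hnormsum.summable
  obtain ⟨sv, hsv⟩ := hsummable
  have hsvb : sv = b := by
    have h1 := hsv.tendsto_sum_nat
    have h2 : Tendsto (fun n => ∑ i ∈ Finset.range n, as i) atTop (𝓝 b) := by
      have h : Tendsto (fun n => b - rs n) atTop (𝓝 (b - 0)) :=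
        tendsto_const_nhds.sub hRt
      rw [sub_zero] at h
      exact h.congr fun n => (hpartial n).symm
    exact tendsto_nhds_unique h1 h2
  rw [hsvb] at hsv
  exact ⟨as, ⟨fun j => (hak j).1, hsv, hnormsum⟩, hak⟩
end

section
/- Let (b_j)_{j≥1} be a sequence of positive reals with b_0 := 1 and b_j nondecreasing. Define c_0 := 1 and c_j := min(√2, b_j / b_{j−1}) · c_{j−1} for j ≥ 1. Then: (i) c_j ≤ b_j for all j; (ii) c_{j+i} ≤ 2^{i/2} c_j for all i, j ≥ 0; (iii) if b_j → ∞ then c_j → ∞. -/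
open Filter Topology

theorem moderated_sequence (b : ℕ → ℝ) (hb0 : b 0 = 1) (hbpos : ∀ j, 0 < b j)
    (hbmono : Monotone b)
    (c : ℕ → ℝ) (hc0 : c 0 = 1)
    (hcrec : ∀ j, c (j + 1) = min (Real.sqrt 2) (b (j + 1) / b j) * c j) :
    (∀ j, c j ≤ b j) ∧
      (∀ i j, c (j + i) ≤ (2 : ℝ) ^ ((i : ℝ) / 2) * c j) ∧
      (Tendsto b atTop atTop → Tendsto c atTop atTop) := by
  have hs1 : (1 : ℝ) ≤ Real.sqrt 2 := by
    rw [show (1:ℝ) = Real.sqrt 1 by simp]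
    exact Real.sqrt_le_sqrt (by norm_num)
  have hsp : (0 : ℝ) < Real.sqrt 2 := lt_of_lt_of_le one_pos hs1
  have hr1 : ∀ j, (1:ℝ) ≤ b (j+1) / b j := fun j =>
    (one_le_div (hbpos j)).mpr (hbmono (Nat.le_succ j))
  have hmin1 : ∀ j, (1:ℝ) ≤ min (Real.sqrt 2) (b (j + 1) / b j) :=
    fun j => le_min hs1 (hr1 j)
  have cpos : ∀ j, 0 < c j := by
    intro j
    induction j with
    | zero => rw [hc0]; exact one_pos
    | succ n ih =>
      rw [hcrec n]
      exact mul_pos (lt_of_lt_of_le one_pos (hmin1 n)) ih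
  have cmono : Monotone c := by
    apply monotone_nat_of_le_succ
    intro n
    rw [hcrec n]
    nlinarith [cpos n, hmin1 n]
  have part1 : ∀ j, c j ≤ b j := by
    intro j
    induction j with
    | zero => rw [hc0, hb0]
    | succ n ih =>
      rw [hcrec n]
      calc min (Real.sqrt 2) (b (n + 1) / b n) * c n
          ≤ (b (n + 1) / b n) * c n := by
            apply mul_le_mul_of_nonneg_right (min_le_right _ _) (cpos n).le
        _ ≤ (b (n + 1) / b n) * b n := by
            apply mul_le_mul_of_nonneg_left ih
            exact le_trans zero_le_one (hr1 n)
        _ = b (n + 1) := by rw [div_mul_cancel₀ _ (hbpos n).ne']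
  have part2 : ∀ i j, c (j + i) ≤ (2 : ℝ) ^ ((i : ℝ) / 2) * c j := by
    intro i j
    induction i with
    | zero => simp
    | succ n ih =>
      have key : c (j + (n + 1)) ≤ Real.sqrt 2 * c (j + n) := by
        rw [show j + (n+1) = (j+n) + 1 by ring, hcrec (j+n)]
        exact mul_le_mul_of_nonneg_right (min_le_left _ _) (cpos _).le
      have h2 : Real.sqrt 2 * (2:ℝ) ^ ((n : ℝ) / 2) = (2:ℝ) ^ (((n:ℕ)+1 : ℝ) / 2) := by
        rw [Real.sqrt_eq_rpow]
        rw [← Real.rpow_add (by norm_num : (0:ℝ) < 2)]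
        ring_nf
      calc c (j + (n + 1)) ≤ Real.sqrt 2 * c (j + n) := key
        _ ≤ Real.sqrt 2 * ((2:ℝ) ^ ((n : ℝ) / 2) * c j) :=
            mul_le_mul_of_nonneg_left ih hsp.le
        _ = (Real.sqrt 2 * (2:ℝ) ^ ((n : ℝ) / 2)) * c j := by ring
        _ = (2:ℝ) ^ (((n:ℕ)+1 : ℝ) / 2) * c j := by rw [h2]
        _ = (2:ℝ) ^ (((n+1 : ℕ) : ℝ) / 2) * c j := by push_cast; ring_nf
  refine ⟨part1, part2, ?_⟩
  intro hb
  by_cases h : ∃ N, ∀ m, N ≤ m → b (m + 1) / b m < Real.sqrt 2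
  · obtain ⟨N, hN⟩ := h
    have heq : ∀ j, N ≤ j → c j = (c N / b N) * b j := by
      intro j hj
      induction j, hj using Nat.le_induction with
      | base => rw [div_mul_cancel₀ _ (hbpos N).ne']
      | succ n hn ih =>
        rw [hcrec n, ih, min_eq_right (le_of_lt (hN n hn))]
        field_simp [(hbpos n).ne', (hbpos N).ne']
    have hconst : 0 < c N / b N := div_pos (cpos N) (hbpos N)
    have : Tendsto (fun j => (c N / b N) * b j) atTop atTop :=
      hb.const_mul_atTop hconst
    apply this.congr'
    filter_upwards [eventually_ge_atTop N] with j hj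
    exact (heq j hj).symm
  · push_neg at h
    apply tendsto_atTop_atTop_of_monotone' cmono
    intro hbdd
    obtain ⟨M, hM⟩ := hbdd
    have hpow : ∀ k : ℕ, ∃ j, Real.sqrt 2 ^ k ≤ c j := by
      intro k
      induction k with
      | zero => exact ⟨0, by rw [hc0]; simp⟩
      | succ n ih =>
        obtain ⟨j, hj⟩ := ih
        obtain ⟨m, hm, hsm⟩ := h j
        refine ⟨m + 1, ?_⟩
        rw [hcrec m, min_eq_left hsm, pow_succ]
        calc Real.sqrt 2 ^ n * Real.sqrt 2 = Real.sqrt 2 * Real.sqrt 2 ^ n := by ring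
          _ ≤ Real.sqrt 2 * c j := mul_le_mul_of_nonneg_left hj hsp.le
          _ ≤ Real.sqrt 2 * c m := mul_le_mul_of_nonneg_left (cmono hm) hsp.le
    have hs2 : (1:ℝ) < Real.sqrt 2 := by
      rw [show (1:ℝ) = Real.sqrt 1 by simp]
      exact Real.sqrt_lt_sqrt (by norm_num) (by norm_num)
    obtain ⟨k, hk⟩ := pow_unbounded_of_one_lt M hs2
    obtain ⟨j, hj⟩ := hpow k
    have : c j ≤ M := hM (Set.mem_range_self j)
    linarith
end
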